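/- arXiv:1007.4025 — 6 statements merged into one kernel-verified Lean document; each statement's English description precedes it below -/
import Mathlib

section
/- Let u : ℝ → ℂ be continuously differentiable with compact support. Then for every R ≥ 0, sup_{r > R} |u(r)| ≤ 2 ‖u'‖_{L²(R,∞)}^{3/4} · ‖r·u‖_{L²(R,∞)}^{1/4}. -/
/-!
Write `φ = ‖u‖²`, so that `|φ'| ≤ 2 ‖u'‖ ‖u‖`. Integrating `φ'` from `r` to `∞` gives
`‖u(r)‖² ≤ 2 ‖u'‖ ‖u‖`, and integrating `(s φ(s))'` from `R ≥ 0` to `∞` gives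
`‖u‖² ≤ 2 ‖u'‖ ‖s u‖` (Cauchy–Schwarz, all norms in `L²(R, ∞)`). Substituting the second bound
into the first yields `‖u(r)‖⁴ ≤ 8 ‖u'‖³ ‖s u‖`.
-/

open MeasureTheory Set

theorem integral_mul_le_sqrt_integral_sq_mul_sqrt_integral_sq {α : Type*} [MeasurableSpace α]
    {μ : Measure α} {f g : α → ℝ} (hf : 0 ≤ᵐ[μ] f) (hg : 0 ≤ᵐ[μ] g)
    (hf₂ : MemLp f 2 μ) (hg₂ : MemLp g 2 μ) :
    ∫ x, f x * g x ∂μ ≤ √(∫ x, f x ^ 2 ∂μ) * √(∫ x, g x ^ 2 ∂μ) := by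
  have h := integral_mul_le_Lp_mul_Lq_of_nonneg Real.HolderConjugate.two_two hf hg
    (by simpa using hf₂) (by simpa using hg₂)
  simpa only [Real.rpow_ofNat, Real.sqrt_eq_rpow, one_div] using h

theorem le_two_mul_rpow_mul_rpow_of_sq_le {x a b c : ℝ} (ha : 0 ≤ a) (hb : 0 ≤ b)
    (hx : x ^ 2 ≤ 2 * (a * c)) (hc : c ^ 2 ≤ 2 * (a * b)) :
    x ≤ 2 * a ^ ((3 : ℝ) / 4) * b ^ ((1 : ℝ) / 4) := by
  refine le_of_pow_le_pow_left₀ four_ne_zero (by positivity) ?_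
  have hpow : (2 * a ^ ((3 : ℝ) / 4) * b ^ ((1 : ℝ) / 4)) ^ 4 = 16 * (a ^ 3 * b) := by
    rw [mul_pow, mul_pow, ← Real.rpow_mul_natCast ha, ← Real.rpow_mul_natCast hb]
    norm_num [mul_assoc]
  calc x ^ 4 = (x ^ 2) ^ 2 := by ring
    _ ≤ (2 * (a * c)) ^ 2 := pow_le_pow_left₀ (sq_nonneg x) hx 2
    _ = 4 * a ^ 2 * c ^ 2 := by ring
    _ ≤ 4 * a ^ 2 * (2 * (a * b)) := by gcongr
    _ ≤ 16 * (a ^ 3 * b) := by nlinarith [mul_nonneg (pow_nonneg ha 3) hb]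
    _ = _ := hpow.symm

namespace HasCompactSupport

variable {f : ℝ → ℝ}

theorem le_integral_Ioi_abs_deriv (hf : ContDiff ℝ 1 f) (hsupp : HasCompactSupport f) (b : ℝ) :
    f b ≤ ∫ x in Ioi b, |deriv f x| := by
  calc f b = -∫ x in Ioi b, deriv f x := by rw [hsupp.integral_Ioi_deriv_eq hf, neg_neg]
    _ ≤ |∫ x in Ioi b, deriv f x| := neg_le_abs _
    _ ≤ ∫ x in Ioi b, |deriv f x| := abs_integral_le_integral_abs

theorem integral_Ioi_le_integral_Ioi_abs_mul_deriv (hf : ContDiff ℝ 1 f)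
    (hsupp : HasCompactSupport f) {a : ℝ} (ha : 0 ≤ a) (hfa : 0 ≤ f a) :
    ∫ x in Ioi a, f x ≤ ∫ x in Ioi a, |x * deriv f x| := by
  have hxf : ContDiff ℝ 1 (fun x => x * f x) := contDiff_id.mul hf
  have hderiv : ∀ x, deriv (fun x => x * f x) x = f x + x * deriv f x := fun x => by
    simpa using ((hasDerivAt_id' x).fun_mul (hf.differentiable one_ne_zero x).hasDerivAt).deriv
  have hint : Integrable f := hf.continuous.integrable_of_hasCompactSupport hsupp
  have hint_mul : Integrable (fun x => x * deriv f x) :=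
    (continuous_id.mul (hf.continuous_deriv le_rfl)).integrable_of_hasCompactSupport
      hsupp.deriv.mul_left
  have hparts : ∫ x in Ioi a, f x = -(a * f a) - ∫ x in Ioi a, x * deriv f x := by
    have hxsupp : HasCompactSupport (fun x => x * f x) := hsupp.mul_left
    have h := hxsupp.integral_Ioi_deriv_eq hxf a
    simp only [hderiv, integral_add hint.integrableOn hint_mul.integrableOn] at h
    linarith
  calc ∫ x in Ioi a, f x ≤ -∫ x in Ioi a, x * deriv f x := by
        rw [hparts]; linarith [mul_nonneg ha hfa]
    _ ≤ |∫ x in Ioi a, x * deriv f x| := neg_le_abs _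
    _ ≤ ∫ x in Ioi a, |x * deriv f x| := abs_integral_le_integral_abs

end HasCompactSupport

section NormSq

variable {E : Type*} [NormedAddCommGroup E] [InnerProductSpace ℝ E] {u : ℝ → E}

theorem abs_deriv_norm_sq_le (hu : Differentiable ℝ u) (x : ℝ) :
    |deriv (fun x => ‖u x‖ ^ 2) x| ≤ 2 * (‖deriv u x‖ * ‖u x‖) := by
  rw [(hu x).hasDerivAt.norm_sq.deriv, abs_mul, abs_two, mul_comm ‖deriv u x‖]
  gcongr
  exact abs_real_inner_le_norm _ _

variable (hu : ContDiff ℝ 1 u) (hsupp : HasCompactSupport u)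
include hu hsupp

theorem norm_sq_le_two_mul_integral_Ioi_norm_deriv_mul_norm (r : ℝ) :
    ‖u r‖ ^ 2 ≤ 2 * ∫ x in Ioi r, ‖deriv u x‖ * ‖u x‖ := by
  have hint : Integrable (fun x => ‖deriv u x‖ * ‖u x‖) :=
    ((hu.continuous_deriv le_rfl).norm.mul hu.continuous.norm).integrable_of_hasCompactSupport
      (hsupp.norm.mul_left)
  calc ‖u r‖ ^ 2 ≤ ∫ x in Ioi r, |deriv (fun x => ‖u x‖ ^ 2) x| :=
        (hsupp.comp_left (g := fun v : E => ‖v‖ ^ 2) (by simp)).le_integral_Ioi_abs_deriv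
          (hu.norm_sq ℝ) r
    _ ≤ ∫ x in Ioi r, 2 * (‖deriv u x‖ * ‖u x‖) :=
        integral_mono_of_nonneg (ae_of_all _ fun _ => abs_nonneg _) (hint.const_mul 2).integrableOn
          (ae_of_all _ (abs_deriv_norm_sq_le (hu.differentiable one_ne_zero)))
    _ = 2 * ∫ x in Ioi r, ‖deriv u x‖ * ‖u x‖ := integral_const_mul _ _

theorem integral_Ioi_norm_sq_le_two_mul_integral_Ioi_norm_deriv_mul_mul_norm {R : ℝ} (hR : 0 ≤ R) :
    ∫ x in Ioi R, ‖u x‖ ^ 2 ≤ 2 * ∫ x in Ioi R, ‖deriv u x‖ * (x * ‖u x‖) := by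
  have hint : Integrable (fun x => ‖deriv u x‖ * (x * ‖u x‖)) :=
    ((hu.continuous_deriv le_rfl).norm.mul (continuous_id.mul hu.continuous.norm)
      ).integrable_of_hasCompactSupport hsupp.norm.mul_left.mul_left
  have hbound : ∀ x ∈ Ioi R,
      |x * deriv (fun x => ‖u x‖ ^ 2) x| ≤ 2 * (‖deriv u x‖ * (x * ‖u x‖)) := fun x hx => by
    have hx : 0 ≤ x := hR.trans (le_of_lt hx)
    rw [abs_mul, abs_of_nonneg hx]
    nlinarith [abs_deriv_norm_sq_le (hu.differentiable one_ne_zero) x]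
  calc ∫ x in Ioi R, ‖u x‖ ^ 2 ≤ ∫ x in Ioi R, |x * deriv (fun x => ‖u x‖ ^ 2) x| :=
        (hsupp.comp_left (g := fun v : E => ‖v‖ ^ 2) (by simp)
          ).integral_Ioi_le_integral_Ioi_abs_mul_deriv (hu.norm_sq ℝ) hR (sq_nonneg _)
    _ ≤ ∫ x in Ioi R, 2 * (‖deriv u x‖ * (x * ‖u x‖)) :=
        integral_mono_of_nonneg (ae_of_all _ fun _ => abs_nonneg _) (hint.const_mul 2).integrableOn
          ((ae_restrict_iff' measurableSet_Ioi).2 (ae_of_all _ hbound))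
    _ = 2 * ∫ x in Ioi R, ‖deriv u x‖ * (x * ‖u x‖) := integral_const_mul _ _

theorem norm_sq_le_two_mul_sqrt_integral_Ioi_mul_sqrt_integral_Ioi {R r : ℝ} (hr : R ≤ r) :
    ‖u r‖ ^ 2 ≤ 2 * (√(∫ x in Ioi R, ‖deriv u x‖ ^ 2) * √(∫ x in Ioi R, ‖u x‖ ^ 2)) := by
  have hu' : Continuous (deriv u) := hu.continuous_deriv le_rfl
  calc ‖u r‖ ^ 2 ≤ 2 * ∫ x in Ioi r, ‖deriv u x‖ * ‖u x‖ :=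
        norm_sq_le_two_mul_integral_Ioi_norm_deriv_mul_norm hu hsupp r
    _ ≤ 2 * ∫ x in Ioi R, ‖deriv u x‖ * ‖u x‖ := by
        gcongr 2 * ?_
        exact setIntegral_mono_set
          ((hu'.norm.mul hu.continuous.norm).integrable_of_hasCompactSupport
            hsupp.norm.mul_left).integrableOn
          (ae_of_all _ fun _ => mul_nonneg (norm_nonneg _) (norm_nonneg _))
          (Ioi_subset_Ioi hr).eventuallyLE
    _ ≤ _ := by
        gcongr 2 * ?_
        exact integral_mul_le_sqrt_integral_sq_mul_sqrt_integral_sq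
          (ae_of_all _ fun _ => norm_nonneg _) (ae_of_all _ fun _ => norm_nonneg _)
          ((hu'.norm.memLp_of_hasCompactSupport hsupp.deriv.norm).restrict _)
          ((hu.continuous.norm.memLp_of_hasCompactSupport hsupp.norm).restrict _)

theorem integral_Ioi_norm_sq_le_two_mul_sqrt_integral_Ioi_mul_sqrt_integral_Ioi {R : ℝ}
    (hR : 0 ≤ R) :
    ∫ x in Ioi R, ‖u x‖ ^ 2 ≤
      2 * (√(∫ x in Ioi R, ‖deriv u x‖ ^ 2) * √(∫ x in Ioi R, x ^ 2 * ‖u x‖ ^ 2)) := by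
  have hu' : Continuous (deriv u) := hu.continuous_deriv le_rfl
  calc ∫ x in Ioi R, ‖u x‖ ^ 2 ≤ 2 * ∫ x in Ioi R, ‖deriv u x‖ * (x * ‖u x‖) :=
        integral_Ioi_norm_sq_le_two_mul_integral_Ioi_norm_deriv_mul_mul_norm hu hsupp hR
    _ ≤ _ := by
        gcongr 2 * ?_
        simpa only [mul_pow] using integral_mul_le_sqrt_integral_sq_mul_sqrt_integral_sq
          (ae_of_all _ fun _ => norm_nonneg _)
          ((ae_restrict_iff' measurableSet_Ioi).2 (ae_of_all _ fun x (hx : R < x) =>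
            mul_nonneg (hR.trans hx.le) (norm_nonneg _)))
          ((hu'.norm.memLp_of_hasCompactSupport hsupp.deriv.norm).restrict _)
          (((continuous_id.mul hu.continuous.norm).memLp_of_hasCompactSupport
            hsupp.norm.mul_left).restrict _)

end NormSq

/-- For `u : ℝ → ℂ` continuously differentiable with compact support and `R ≥ 0`,
`sup_{r > R} |u(r)| ≤ 2 ‖u'‖_{L²(R,∞)}^{3/4} ‖r·u‖_{L²(R,∞)}^{1/4}`. -/
theorem stmt2 (u : ℝ → ℂ) (hu : ContDiff ℝ 1 u) (hsupp : HasCompactSupport u)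
    (R : ℝ) (hR : 0 ≤ R) :
    ∀ r ∈ Set.Ioi R, ‖u r‖ ≤
      2 * Real.sqrt (∫ r in Set.Ioi R, ‖deriv u r‖ ^ 2) ^ ((3 : ℝ) / 4) *
        Real.sqrt (∫ r in Set.Ioi R, r ^ 2 * ‖u r‖ ^ 2) ^ ((1 : ℝ) / 4) := by
  intro r hr
  have hL2 : √(∫ x in Ioi R, ‖u x‖ ^ 2) ^ 2 ≤
      2 * (√(∫ x in Ioi R, ‖deriv u x‖ ^ 2) * √(∫ x in Ioi R, x ^ 2 * ‖u x‖ ^ 2)) := by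
    rw [Real.sq_sqrt (setIntegral_nonneg measurableSet_Ioi fun _ _ => by positivity)]
    exact integral_Ioi_norm_sq_le_two_mul_sqrt_integral_Ioi_mul_sqrt_integral_Ioi hu hsupp hR
  exact le_two_mul_rpow_mul_rpow_of_sq_le (Real.sqrt_nonneg _) (Real.sqrt_nonneg _)
    (norm_sq_le_two_mul_sqrt_integral_Ioi_mul_sqrt_integral_Ioi hu hsupp hr.le) hL2
end

section
/- Let u : ℝ → ℂ be continuously differentiable with compact support. Then for every R ≥ 0, ∫_R^∞ |u(r)|⁴ r² dr ≤ 4 ‖u'‖_{L²(R,∞)}^{3/2} · ‖r·u‖_{L²(R,∞)}^{5/2}. -/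
/-!
Put `I = ∫_R^∞ s ‖u s‖ ‖u' s‖`, `A = ‖r u‖_{L²(R,∞)}` and `B = ‖u'‖_{L²(R,∞)}`.
The function `r ‖u r‖²` vanishes at infinity and has derivative `‖u‖² + 2 r ⟪u, u'⟫`, so the
fundamental theorem of calculus gives `r ‖u r‖² + ∫_r^∞ ‖u‖² ≤ 2 I` for `r ≥ R ≥ 0`.
Hence `∫ ‖u‖⁴ r² ≤ 2 I ∫ r ‖u‖²` and `∫_R^∞ ‖u‖² ≤ 2 I`, while Cauchy–Schwarz gives `I ≤ A B` and
`∫ r ‖u‖² ≤ A √(2 I)`. Altogether the left side is at most `2 √2 A^{5/2} B^{3/2}`.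
-/

open MeasureTheory Set Filter

open scoped RealInnerProductSpace

theorem integral_mul_le_sqrt_mul_sqrt_of_nonneg {α : Type*} [MeasurableSpace α] {μ : Measure α}
    {f g : α → ℝ} (hf_nonneg : 0 ≤ᵐ[μ] f) (hg_nonneg : 0 ≤ᵐ[μ] g) (hf : MemLp f 2 μ)
    (hg : MemLp g 2 μ) :
    ∫ a, f a * g a ∂μ ≤ √(∫ a, f a ^ 2 ∂μ) * √(∫ a, g a ^ 2 ∂μ) := by
  have h := integral_mul_le_Lp_mul_Lq_of_nonneg Real.HolderConjugate.two_two hf_nonneg hg_nonneg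
    (by rwa [ENNReal.ofReal_ofNat]) (by rwa [ENNReal.ofReal_ofNat])
  simpa only [Real.rpow_two, Real.sqrt_eq_rpow] using h

theorem Real.mul_mul_sqrt_two_mul_le {A B : ℝ} (hA : 0 ≤ A) (hB : 0 ≤ B) :
    2 * (A * B) * (A * √(2 * (A * B))) ≤ 4 * B ^ ((3 : ℝ) / 2) * A ^ ((5 : ℝ) / 2) := by
  have h32 : B ^ ((3 : ℝ) / 2) = B * √B := by
    rw [show (3 : ℝ) / 2 = 1 + 1 / 2 by norm_num, Real.rpow_add' hB (by norm_num), Real.rpow_one,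
      Real.sqrt_eq_rpow]
  have h52 : A ^ ((5 : ℝ) / 2) = A ^ 2 * √A := by
    rw [show (5 : ℝ) / 2 = 2 + 1 / 2 by norm_num, Real.rpow_add' hA (by norm_num), Real.rpow_two,
      Real.sqrt_eq_rpow]
  have hsqrt2 : √2 ≤ 2 := by
    rw [Real.sqrt_le_left (by norm_num)]; norm_num
  rw [h32, h52, Real.sqrt_mul (by norm_num), Real.sqrt_mul hA]
  calc 2 * (A * B) * (A * (√2 * (√A * √B))) = 2 * √2 * (A ^ 2 * √A * (B * √B)) := by ring
    _ ≤ 2 * 2 * (A ^ 2 * √A * (B * √B)) := by gcongr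
    _ = _ := by ring

section NormedGroup

variable {E : Type*} [NormedAddCommGroup E] {u : ℝ → E}

theorem HasCompactSupport.integrable_of_forall_eq_zero (hsupp : HasCompactSupport u)
    {g : ℝ → ℝ} (hg : Continuous g) (hgu : ∀ s, u s = 0 → g s = 0) : Integrable g :=
  hg.integrable_of_hasCompactSupport (hsupp.mono fun s hs hu0 => hs (hgu s hu0))

theorem integral_mul_norm_mul_norm_le {v : ℝ → E} (hu : Continuous u)
    (hsupp : HasCompactSupport u) (hv : Continuous v) (hvsupp : HasCompactSupport v) {R : ℝ}
    (hR : 0 ≤ R) :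
    ∫ s in Ioi R, s * (‖u s‖ * ‖v s‖) ≤
      √(∫ s in Ioi R, s ^ 2 * ‖u s‖ ^ 2) * √(∫ s in Ioi R, ‖v s‖ ^ 2) := by
  have h := integral_mul_le_sqrt_mul_sqrt_of_nonneg (μ := volume.restrict (Ioi R))
    (f := fun s => s * ‖u s‖) (g := fun s => ‖v s‖) ?_ ?_ ?_ ?_
  · simpa only [mul_pow, mul_assoc] using h
  · filter_upwards [ae_restrict_mem measurableSet_Ioi] with s hs
    have hs0 : 0 ≤ s := hR.trans (le_of_lt hs)
    positivity
  · exact Eventually.of_forall fun s => norm_nonneg _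
  · exact ((continuous_id.mul hu.norm).memLp_of_hasCompactSupport hsupp.norm.mul_left).restrict _
  · exact (hv.norm.memLp_of_hasCompactSupport hvsupp.norm).restrict _

end NormedGroup

section InnerProductSpace

variable {E : Type*} [NormedAddCommGroup E] [InnerProductSpace ℝ E] {u : ℝ → E}

theorem mul_norm_sq_eq_neg_integral_Ioi (hu : ContDiff ℝ 1 u) (hsupp : HasCompactSupport u)
    (r : ℝ) : r * ‖u r‖ ^ 2 = -∫ s in Ioi r, (‖u s‖ ^ 2 + s * (2 * ⟪u s, deriv u s⟫)) := by
  have hderiv (s : ℝ) : HasDerivAt (fun t => t * ‖u t‖ ^ 2)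
      (‖u s‖ ^ 2 + s * (2 * ⟪u s, deriv u s⟫)) s := by
    simpa using (hasDerivAt_id' s).fun_mul ((hu.differentiable one_ne_zero s).hasDerivAt.norm_sq)
  have hint : Integrable fun s => ‖u s‖ ^ 2 + s * (2 * ⟪u s, deriv u s⟫) :=
    hsupp.integrable_of_forall_eq_zero
      (by have := hu.continuous; have := hu.continuous_deriv le_rfl; fun_prop)
      fun s h => by simp [h]
  have hlim : Tendsto (fun t => t * ‖u t‖ ^ 2) atTop (nhds 0) :=
    (hsupp.comp_left (g := fun z : E => ‖z‖ ^ 2) (by simp)).mul_left.is_zero_at_infty.mono_left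
      atTop_le_cocompact
  rw [integral_Ioi_of_hasDerivAt_of_tendsto' (fun s _ => hderiv s) hint.integrableOn hlim]
  ring

theorem mul_norm_sq_add_integral_norm_sq_le (hu : ContDiff ℝ 1 u) (hsupp : HasCompactSupport u)
    {r : ℝ} (hr : 0 ≤ r) :
    r * ‖u r‖ ^ 2 + ∫ s in Ioi r, ‖u s‖ ^ 2 ≤ 2 * ∫ s in Ioi r, s * (‖u s‖ * ‖deriv u s‖) := by
  have hcont := hu.continuous
  have hcont' := hu.continuous_deriv le_rfl
  have hinner : -∫ s in Ioi r, s * (2 * ⟪u s, deriv u s⟫) ≤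
      ∫ s in Ioi r, 2 * (s * (‖u s‖ * ‖deriv u s‖)) := by
    rw [← integral_neg]
    refine setIntegral_mono_on ?_ ?_ measurableSet_Ioi fun s hs => ?pointwise
    case pointwise =>
      have hs0 : 0 ≤ s := hr.trans (le_of_lt hs)
      have := neg_le_of_abs_le (abs_real_inner_le_norm (u s) (deriv u s))
      nlinarith
    all_goals
      exact (hsupp.integrable_of_forall_eq_zero (by fun_prop) fun s h => by simp [h]).integrableOn
  rw [mul_norm_sq_eq_neg_integral_Ioi hu hsupp r, integral_add, ← integral_const_mul]
  · linarith
  all_goals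
    exact (hsupp.integrable_of_forall_eq_zero (by fun_prop) fun s h => by simp [h]).integrableOn

theorem mul_norm_sq_le_two_mul_integral (hu : ContDiff ℝ 1 u) (hsupp : HasCompactSupport u)
    {R r : ℝ} (hR : 0 ≤ R) (hr : R ≤ r) :
    r * ‖u r‖ ^ 2 ≤ 2 * ∫ s in Ioi R, s * (‖u s‖ * ‖deriv u s‖) := by
  have hcont := hu.continuous
  have hcont' := hu.continuous_deriv le_rfl
  have hmono : ∫ s in Ioi r, s * (‖u s‖ * ‖deriv u s‖) ≤
      ∫ s in Ioi R, s * (‖u s‖ * ‖deriv u s‖) := by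
    refine setIntegral_mono_set ?_ ?_ (Ioi_subset_Ioi hr).eventuallyLE
    · exact (hsupp.integrable_of_forall_eq_zero (by fun_prop) fun s h => by simp [h]).integrableOn
    · filter_upwards [ae_restrict_mem measurableSet_Ioi] with s hs
      have hs0 : 0 ≤ s := hR.trans (le_of_lt hs)
      positivity
  have hbound := mul_norm_sq_add_integral_norm_sq_le hu hsupp (hR.trans hr)
  have hL2 : 0 ≤ ∫ s in Ioi r, ‖u s‖ ^ 2 :=
    setIntegral_nonneg measurableSet_Ioi fun s _ => by positivity
  linarith

theorem integral_norm_pow_four_mul_sq_le (hu : ContDiff ℝ 1 u) (hsupp : HasCompactSupport u)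
    {R : ℝ} (hR : 0 ≤ R) :
    ∫ r in Ioi R, ‖u r‖ ^ 4 * r ^ 2 ≤
      2 * (∫ s in Ioi R, s * (‖u s‖ * ‖deriv u s‖)) * ∫ r in Ioi R, r * ‖u r‖ ^ 2 := by
  have hcont := hu.continuous
  rw [← integral_const_mul]
  refine setIntegral_mono_on ?_ ?_ measurableSet_Ioi fun r hr => ?pointwise
  case pointwise =>
    have hr0 : 0 ≤ r * ‖u r‖ ^ 2 := by have := hR.trans (le_of_lt hr); positivity
    calc ‖u r‖ ^ 4 * r ^ 2 = (r * ‖u r‖ ^ 2) * (r * ‖u r‖ ^ 2) := by ring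
      _ ≤ _ := mul_le_mul_of_nonneg_right (mul_norm_sq_le_two_mul_integral hu hsupp hR hr.le) hr0
  all_goals
    exact (hsupp.integrable_of_forall_eq_zero (by fun_prop) fun s h => by simp [h]).integrableOn

end InnerProductSpace

/-- For `u : ℝ → ℂ` continuously differentiable with compact support and `R ≥ 0`,
`∫_R^∞ |u(r)|⁴ r² dr ≤ 4 ‖u'‖_{L²(R,∞)}^{3/2} ‖r·u‖_{L²(R,∞)}^{5/2}`. -/
theorem stmt4 (u : ℝ → ℂ) (hu : ContDiff ℝ 1 u) (hsupp : HasCompactSupport u)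
    (R : ℝ) (hR : 0 ≤ R) :
    (∫ r in Set.Ioi R, ‖u r‖ ^ 4 * r ^ 2) ≤
      4 * Real.sqrt (∫ r in Set.Ioi R, ‖deriv u r‖ ^ 2) ^ ((3 : ℝ) / 2) *
        Real.sqrt (∫ r in Set.Ioi R, r ^ 2 * ‖u r‖ ^ 2) ^ ((5 : ℝ) / 2) := by
  set I := ∫ s in Ioi R, s * (‖u s‖ * ‖deriv u s‖)
  set A := √(∫ r in Ioi R, r ^ 2 * ‖u r‖ ^ 2)
  set B := √(∫ r in Ioi R, ‖deriv u r‖ ^ 2)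
  have hI : I ≤ A * B := integral_mul_norm_mul_norm_le hu.continuous hsupp
    (hu.continuous_deriv le_rfl) hsupp.deriv hR
  have hI0 : 0 ≤ I := setIntegral_nonneg measurableSet_Ioi fun s hs => by
    have := hR.trans (le_of_lt hs); positivity
  have hL2 : ∫ s in Ioi R, ‖u s‖ ^ 2 ≤ 2 * I := by
    have hbound := mul_norm_sq_add_integral_norm_sq_le hu hsupp hR
    have hboundary : 0 ≤ R * ‖u R‖ ^ 2 := by positivity
    linarith
  have hweighted : ∫ r in Ioi R, r * ‖u r‖ ^ 2 ≤ A * √(2 * I) := by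
    have h := integral_mul_norm_mul_norm_le hu.continuous hsupp hu.continuous hsupp hR
    simp only [← sq] at h
    exact h.trans (by gcongr)
  calc ∫ r in Ioi R, ‖u r‖ ^ 4 * r ^ 2 ≤ 2 * I * ∫ r in Ioi R, r * ‖u r‖ ^ 2 :=
        integral_norm_pow_four_mul_sq_le hu hsupp hR
    _ ≤ 2 * I * (A * √(2 * I)) := by gcongr
    _ ≤ 2 * (A * B) * (A * √(2 * (A * B))) := by gcongr
    _ ≤ 4 * B ^ ((3 : ℝ) / 2) * A ^ ((5 : ℝ) / 2) :=
        Real.mul_mul_sqrt_two_mul_le (Real.sqrt_nonneg _) (Real.sqrt_nonneg _)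
end

section
/- Let u : ℝ³ → ℂ be continuously differentiable with compact support and radial (u(x) depends only on |x|). Then for every m > 0, ∫_{|x|>m} |u(x)|⁴ dx ≤ m^{-2} (∫_{|x|>m} |∇u(x)|² dx)^{1/2} · (∫_{|x|>m} |u(x)|² dx)^{3/2}. (In fact the inequality holds with the absolute constant 1/(2π) ≤ 1 in front of the right-hand side.) -/
/-!
Write `u x = f ‖x‖`. For `r ≥ m`, `‖f r‖² = -∫_r^∞ (‖f‖²)' ≤ 2 ∫_r^∞ ‖f‖ ‖f'‖`; multiplying by
`r² ≤ s²` and applying Cauchy–Schwarz gives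
`r² ‖f r‖² ≤ 2 (∫_m^∞ s² ‖f‖²)^{1/2} (∫_m^∞ s² ‖f'‖²)^{1/2}`.
In polar coordinates the two integrals are `(4π)⁻¹ ∫_{|x|>m} ‖u‖²` and at most
`(4π)⁻¹ ∫_{|x|>m} ‖∇u‖²`, so `‖u x‖² ≤ (2π m²)⁻¹ ‖∇u‖₂ ‖u‖₂` on `{|x| > m}`, and integrating
`‖u‖⁴ ≤ (sup ‖u‖²) ‖u‖²` over that region gives the claim.
-/

open MeasureTheory Set

theorem integral_mul_le_sqrt_mul_sqrt {α : Type*} [MeasurableSpace α] {μ : Measure α}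
    {f g : α → ℝ} (hf0 : 0 ≤ᵐ[μ] f) (hg0 : 0 ≤ᵐ[μ] g) (hf : MemLp f 2 μ) (hg : MemLp g 2 μ) :
    ∫ a, f a * g a ∂μ ≤ √(∫ a, f a ^ 2 ∂μ) * √(∫ a, g a ^ 2 ∂μ) := by
  have h := integral_mul_le_Lp_mul_Lq_of_nonneg Real.HolderConjugate.two_two hf0 hg0
    (by simpa using hf) (by simpa using hg)
  simpa only [Real.sqrt_eq_rpow, one_div, Real.rpow_two] using h

theorem HasCompactSupport.of_hasDerivAt {E : Type*} [NormedAddCommGroup E] [NormedSpace ℝ E]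
    {f f' : ℝ → E} (hsupp : HasCompactSupport f) (hf : ∀ r, HasDerivAt f (f' r) r) :
    HasCompactSupport f' :=
  (funext fun r => (hf r).deriv : deriv f = f') ▸ hsupp.deriv

theorem Continuous.integrable_norm_pow_of_hasCompactSupport {α G : Type*} [TopologicalSpace α]
    [MeasurableSpace α] [OpensMeasurableSpace α] {μ : Measure α} [IsFiniteMeasureOnCompacts μ]
    [NormedAddCommGroup G] {v : α → G} (hv : Continuous v) (hsupp : HasCompactSupport v)
    {n : ℕ} (hn : n ≠ 0) : Integrable (fun x => ‖v x‖ ^ n) μ :=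
  (hv.norm.pow n).integrable_of_hasCompactSupport
    (hsupp.comp_left (g := fun y : G => ‖y‖ ^ n) (by simp [hn]))

theorem setIntegral_norm_pow_four_le {α G : Type*} [TopologicalSpace α] [MeasurableSpace α]
    [OpensMeasurableSpace α] {μ : Measure α} [IsFiniteMeasureOnCompacts μ]
    [NormedAddCommGroup G] {u : α → G} (hu : Continuous u) (hsupp : HasCompactSupport u)
    {S : Set α} (hS : MeasurableSet S) {C : ℝ} (hC : ∀ x ∈ S, ‖u x‖ ^ 2 ≤ C) :
    ∫ x in S, ‖u x‖ ^ 4 ∂μ ≤ C * ∫ x in S, ‖u x‖ ^ 2 ∂μ := by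
  rw [← integral_const_mul]
  refine setIntegral_mono_on
    (hu.integrable_norm_pow_of_hasCompactSupport hsupp (n := 4) (by norm_num)).integrableOn
    ((hu.integrable_norm_pow_of_hasCompactSupport hsupp two_ne_zero).integrableOn.const_mul C)
    hS fun x hx => ?_
  calc ‖u x‖ ^ 4 = ‖u x‖ ^ 2 * ‖u x‖ ^ 2 := by ring
    _ ≤ C * ‖u x‖ ^ 2 := mul_le_mul_of_nonneg_right (hC x hx) (by positivity)

theorem setIntegral_fun_norm_gt_addHaar {E F : Type*} [NormedAddCommGroup E] [NormedSpace ℝ E]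
    [Nontrivial E] [FiniteDimensional ℝ E] [MeasurableSpace E] [BorelSpace E] (μ : Measure E)
    [μ.IsAddHaarMeasure] [NormedAddCommGroup F] [NormedSpace ℝ F] (φ : ℝ → F) {m : ℝ}
    (hm : 0 ≤ m) :
    ∫ x in {x : E | m < ‖x‖}, φ ‖x‖ ∂μ =
      Module.finrank ℝ E • μ.real (Metric.ball 0 1) •
        ∫ y in Ioi m, y ^ (Module.finrank ℝ E - 1) • φ y := by
  have hind : {x : E | m < ‖x‖}.indicator (fun x => φ ‖x‖) = fun x => (Ioi m).indicator φ ‖x‖ :=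
    funext fun x => indicator_comp_right (s := Ioi m) (g := φ) norm
  rw [← integral_indicator (measurableSet_lt measurable_const measurable_norm), hind,
    integral_fun_norm_addHaar μ, ← indicator_smul, setIntegral_indicator measurableSet_Ioi,
    Ioi_inter_Ioi, max_eq_right hm]

local notation "ℝ³" => EuclideanSpace ℝ (Fin 3)

theorem setIntegral_fun_norm_gt_euclideanSpace_fin_three (φ : ℝ → ℝ) {m : ℝ} (hm : 0 ≤ m) :
    ∫ x in {x : ℝ³ | m < ‖x‖}, φ ‖x‖ =
      4 * Real.pi * ∫ y in Ioi m, y ^ 2 * φ y := by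
  rw [setIntegral_fun_norm_gt_addHaar volume φ hm, measureReal_def,
    EuclideanSpace.volume_ball_fin_three]
  simp only [finrank_euclideanSpace, Fintype.card_fin, one_pow, one_mul, ENNReal.ofReal_one,
    nsmul_eq_mul, smul_eq_mul, ENNReal.toReal_ofReal (by positivity : 0 ≤ Real.pi * 4 / 3)]
  ring

section OneDimensional

variable {F : Type*} [NormedAddCommGroup F] [InnerProductSpace ℝ F]

theorem norm_sq_le_integral_Ioi {f f' : ℝ → F} (hf : ∀ r, HasDerivAt f (f' r) r)
    (hf' : Continuous f') (hsupp : HasCompactSupport f) (r : ℝ) :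
    ‖f r‖ ^ 2 ≤ ∫ s in Ioi r, 2 * (‖f s‖ * ‖f' s‖) := by
  have hfc : Continuous f := continuous_iff_continuousAt.2 fun r => (hf r).continuousAt
  have hinner : Integrable fun s => 2 * inner ℝ (f s) (f' s) :=
    (continuous_const.mul (hfc.inner hf')).integrable_of_hasCompactSupport
      (hsupp.mono fun s hs h => hs (by simp [h]))
  have hprod : Integrable fun s => 2 * (‖f s‖ * ‖f' s‖) :=
    (continuous_const.mul (hfc.norm.mul hf'.norm)).integrable_of_hasCompactSupport
      (hsupp.norm.mul_right.mul_left)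
  have hftc : ∫ s in Ioi r, 2 * inner ℝ (f s) (f' s) = 0 - ‖f r‖ ^ 2 :=
    integral_Ioi_of_hasDerivAt_of_tendsto (f := (‖f ·‖ ^ 2))
      (hfc.norm.pow 2).continuousWithinAt (fun s _ => (hf s).norm_sq) hinner.integrableOn
      ((hsupp.comp_left (g := (‖·‖ ^ 2)) (by simp)).is_zero_at_infty.mono_left
        atTop_le_cocompact)
  calc ‖f r‖ ^ 2 = ∫ s in Ioi r, -(2 * inner ℝ (f s) (f' s)) := by
        rw [integral_neg, hftc]; ring
    _ ≤ ∫ s in Ioi r, 2 * (‖f s‖ * ‖f' s‖) :=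
        setIntegral_mono hinner.neg.integrableOn hprod.integrableOn fun s => by
          linarith [abs_real_inner_le_norm (f s) (f' s), neg_abs_le (inner ℝ (f s) (f' s))]

theorem mul_norm_sq_le_two_mul_sqrt_mul_sqrt {f f' : ℝ → F} {w : ℝ → ℝ} {m r : ℝ}
    (hf : ∀ r, HasDerivAt f (f' r) r) (hf' : Continuous f') (hsupp : HasCompactSupport f)
    (hw : Continuous w) (hw_mono : MonotoneOn w (Ici m)) (hw0 : 0 ≤ w m) (hr : m ≤ r) :
    w r * ‖f r‖ ^ 2 ≤
      2 * √(∫ s in Ioi m, w s * ‖f s‖ ^ 2) * √(∫ s in Ioi m, w s * ‖f' s‖ ^ 2) := by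
  have hfc : Continuous f := continuous_iff_continuousAt.2 fun r => (hf r).continuousAt
  have hsupp' := hsupp.of_hasDerivAt hf
  have hw_nonneg : ∀ s ∈ Ici m, 0 ≤ w s := fun s hs => hw0.trans (hw_mono self_mem_Ici hs hs)
  have hint : ∀ c : ℝ → ℝ, Continuous c → Integrable fun s => c s * (2 * (‖f s‖ * ‖f' s‖)) :=
    fun c hc => Continuous.integrable_of_hasCompactSupport
      (hc.mul (continuous_const.mul (hfc.norm.mul hf'.norm))) hsupp.norm.mul_right.mul_left.mul_left
  have hmemLp : ∀ g : ℝ → F, Continuous g → HasCompactSupport g →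
      MemLp (fun s => √(w s) * ‖g s‖) 2 (volume.restrict (Ioi m)) := fun g hg hgs =>
    ((hw.sqrt.mul hg.norm).memLp_of_hasCompactSupport hgs.norm.mul_left).restrict _
  have hsq : ∀ g : ℝ → F, ∫ s in Ioi m, (√(w s) * ‖g s‖) ^ 2 = ∫ s in Ioi m, w s * ‖g s‖ ^ 2 :=
    fun g => setIntegral_congr_fun measurableSet_Ioi fun s hs => by
      rw [mul_pow, Real.sq_sqrt (hw_nonneg s (Ioi_subset_Ici_self hs))]
  calc w r * ‖f r‖ ^ 2 ≤ w r * ∫ s in Ioi r, 2 * (‖f s‖ * ‖f' s‖) :=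
        mul_le_mul_of_nonneg_left (norm_sq_le_integral_Ioi hf hf' hsupp r) (hw_nonneg r hr)
    _ = ∫ s in Ioi r, w r * (2 * (‖f s‖ * ‖f' s‖)) := (integral_const_mul _ _).symm
    _ ≤ ∫ s in Ioi r, w s * (2 * (‖f s‖ * ‖f' s‖)) :=
        setIntegral_mono_on (hint _ continuous_const).integrableOn (hint w hw).integrableOn
          measurableSet_Ioi fun s hs =>
            mul_le_mul_of_nonneg_right (hw_mono hr (hr.trans hs.le) hs.le) (by positivity)
    _ ≤ ∫ s in Ioi m, w s * (2 * (‖f s‖ * ‖f' s‖)) :=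
        setIntegral_mono_set (hint w hw).integrableOn
          ((ae_restrict_mem measurableSet_Ioi).mono fun s hs =>
            mul_nonneg (hw_nonneg s (Ioi_subset_Ici_self hs)) (by positivity))
          (Ioi_subset_Ioi hr).eventuallyLE
    _ = 2 * ∫ s in Ioi m, (√(w s) * ‖f s‖) * (√(w s) * ‖f' s‖) := by
        rw [← integral_const_mul]
        refine setIntegral_congr_fun measurableSet_Ioi fun s hs => ?_
        rw [mul_mul_mul_comm, Real.mul_self_sqrt (hw_nonneg s (Ioi_subset_Ici_self hs))]
        ring
    _ ≤ 2 * (√(∫ s in Ioi m, (√(w s) * ‖f s‖) ^ 2) *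
          √(∫ s in Ioi m, (√(w s) * ‖f' s‖) ^ 2)) := by
        gcongr
        exact integral_mul_le_sqrt_mul_sqrt (.of_forall fun s => by positivity)
          (.of_forall fun s => by positivity) (hmemLp f hfc hsupp) (hmemLp f' hf' hsupp')
    _ = _ := by rw [hsq, hsq, mul_assoc]

end OneDimensional

section Radial

variable {E : Type*} [NormedAddCommGroup E] [NormedSpace ℝ E] {e : E}

theorem apply_eq_apply_norm_smul_of_radial {X : Type*} {u : E → X}
    (hrad : ∀ x y : E, ‖x‖ = ‖y‖ → u x = u y) (he : ‖e‖ = 1) (x : E) : u x = u (‖x‖ • e) :=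
  hrad _ _ (by rw [norm_smul, he, mul_one, norm_norm])

variable {G : Type*} [NormedAddCommGroup G] [NormedSpace ℝ G] {u : E → G}

theorem hasDerivAt_comp_smul_const (hu : Differentiable ℝ u) (v : E) (r : ℝ) :
    HasDerivAt (fun t : ℝ => u (t • v)) (fderiv ℝ u (r • v) v) r := by
  simpa [Function.comp_def] using
    (hu _).hasFDerivAt.comp_hasDerivAt r ((hasDerivAt_id r).smul_const v)

theorem fderiv_smul_apply_eq_of_radial (hrad : ∀ x y : E, ‖x‖ = ‖y‖ → u x = u y)
    (hu : Differentiable ℝ u) {v : E} (he : ‖e‖ = 1) (hv : ‖v‖ = 1) (r : ℝ) :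
    fderiv ℝ u (r • v) v = fderiv ℝ u (r • e) e := by
  have hsame : (fun t : ℝ => u (t • v)) = fun t => u (t • e) :=
    funext fun t => hrad _ _ (by rw [norm_smul, norm_smul, he, hv])
  exact (hasDerivAt_comp_smul_const hu v r).unique (hsame ▸ hasDerivAt_comp_smul_const hu e r)

theorem norm_fderiv_norm_smul_apply_le_of_radial (hrad : ∀ x y : E, ‖x‖ = ‖y‖ → u x = u y)
    (hu : Differentiable ℝ u) (he : ‖e‖ = 1) {x : E} (hx : x ≠ 0) :
    ‖fderiv ℝ u (‖x‖ • e) e‖ ≤ ‖fderiv ℝ u x‖ := by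
  have hv : ‖(‖x‖⁻¹ • x)‖ = 1 := norm_smul_inv_norm hx
  have hxv : ‖x‖ • ‖x‖⁻¹ • x = x := smul_inv_smul₀ (norm_ne_zero_iff.2 hx) x
  rw [← fderiv_smul_apply_eq_of_radial hrad hu he hv, hxv]
  simpa [hv] using (fderiv ℝ u x).le_opNorm (‖x‖⁻¹ • x)

end Radial

theorem setIntegral_norm_sq_gt_eq_of_radial {G : Type*} [NormedAddCommGroup G] {u : ℝ³ → G}
    (hrad : ∀ x y : ℝ³, ‖x‖ = ‖y‖ → u x = u y) {e : ℝ³} (he : ‖e‖ = 1) {m : ℝ} (hm : 0 ≤ m) :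
    ∫ y in {y : ℝ³ | m < ‖y‖}, ‖u y‖ ^ 2 = 4 * Real.pi * ∫ s in Ioi m, s ^ 2 * ‖u (s • e)‖ ^ 2 := by
  have hu_eq : (fun y => ‖u y‖ ^ 2) = fun y => ‖u (‖y‖ • e)‖ ^ 2 :=
    funext fun y => by rw [apply_eq_apply_norm_smul_of_radial hrad he y]
  rw [hu_eq]
  exact setIntegral_fun_norm_gt_euclideanSpace_fin_three (fun s => ‖u (s • e)‖ ^ 2) hm

theorem integral_norm_fderiv_sq_le_setIntegral_of_radial {G : Type*} [NormedAddCommGroup G]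
    [NormedSpace ℝ G] {u : ℝ³ → G} (hu : ContDiff ℝ 1 u)
    (hsupp : HasCompactSupport u) (hrad : ∀ x y : ℝ³, ‖x‖ = ‖y‖ → u x = u y) {e : ℝ³}
    (he : ‖e‖ = 1) {m : ℝ} (hm : 0 ≤ m) :
    4 * Real.pi * ∫ s in Ioi m, s ^ 2 * ‖fderiv ℝ u (s • e) e‖ ^ 2 ≤
      ∫ y in {y : ℝ³ | m < ‖y‖}, ‖fderiv ℝ u y‖ ^ 2 := by
  rw [← setIntegral_fun_norm_gt_euclideanSpace_fin_three
    (fun s => ‖fderiv ℝ u (s • e) e‖ ^ 2) hm]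
  refine integral_mono_of_nonneg (.of_forall fun y => by positivity)
    ((hu.continuous_fderiv one_ne_zero).integrable_norm_pow_of_hasCompactSupport
      (hsupp.fderiv (𝕜 := ℝ)) two_ne_zero).integrableOn ?_
  filter_upwards [ae_restrict_mem (measurableSet_lt measurable_const measurable_norm)] with y hy
  have hy0 : y ≠ 0 := norm_pos_iff.1 (hm.trans_lt hy)
  exact pow_le_pow_left₀ (norm_nonneg _)
    (norm_fderiv_norm_smul_apply_le_of_radial hrad (hu.differentiable one_ne_zero) he hy0) 2

theorem sq_norm_mul_norm_sq_le_of_radial {F : Type*} [NormedAddCommGroup F]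
    [InnerProductSpace ℝ F] {u : ℝ³ → F} (hu : ContDiff ℝ 1 u)
    (hsupp : HasCompactSupport u) (hrad : ∀ x y : ℝ³, ‖x‖ = ‖y‖ → u x = u y)
    {m : ℝ} (hm : 0 ≤ m) {x : ℝ³} (hx : m ≤ ‖x‖) :
    ‖x‖ ^ 2 * ‖u x‖ ^ 2 ≤
      (2 * Real.pi)⁻¹ * √(∫ y in {y : ℝ³ | m < ‖y‖}, ‖fderiv ℝ u y‖ ^ 2) *
        √(∫ y in {y : ℝ³ | m < ‖y‖}, ‖u y‖ ^ 2) := by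
  set e : ℝ³ := EuclideanSpace.single 0 1
  have he : ‖e‖ = 1 := by simp [e]
  have hf : ∀ r : ℝ, HasDerivAt (fun r => u (r • e)) (fderiv ℝ u (r • e) e) r :=
    hasDerivAt_comp_smul_const (hu.differentiable one_ne_zero) e
  have hf' : Continuous fun r : ℝ => fderiv ℝ u (r • e) e :=
    ((hu.continuous_fderiv one_ne_zero).comp (continuous_id.smul continuous_const)).clm_apply
      continuous_const
  have hfs : HasCompactSupport fun r : ℝ => u (r • e) :=
    hsupp.comp_isClosedEmbedding (isClosedEmbedding_smul_left (norm_ne_zero_iff.1 (by simp [he])))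
  have hw : MonotoneOn (· ^ 2 : ℝ → ℝ) (Ici m) := pow_left_monotoneOn.mono fun s hs => hm.trans hs
  have key := mul_norm_sq_le_two_mul_sqrt_mul_sqrt hf hf' hfs (continuous_pow 2) hw (sq_nonneg m) hx
  have hA := integral_norm_fderiv_sq_le_setIntegral_of_radial hu hsupp hrad he hm
  set If := ∫ s in Ioi m, s ^ 2 * ‖u (s • e)‖ ^ 2
  set Ig := ∫ s in Ioi m, s ^ 2 * ‖fderiv ℝ u (s • e) e‖ ^ 2
  have h4π : (0 : ℝ) ≤ 4 * Real.pi := by positivity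
  rw [apply_eq_apply_norm_smul_of_radial hrad he x, setIntegral_norm_sq_gt_eq_of_radial hrad he hm]
  calc ‖x‖ ^ 2 * ‖u (‖x‖ • e)‖ ^ 2 ≤ 2 * √If * √Ig := key
    _ = (2 * Real.pi)⁻¹ * √(4 * Real.pi * Ig) * √(4 * Real.pi * If) := by
        rw [Real.sqrt_mul h4π Ig, Real.sqrt_mul h4π If]
        linear_combination (-(2 * Real.pi)⁻¹ * √If * √Ig) * Real.mul_self_sqrt h4π +
          (-2 * √If * √Ig) * mul_inv_cancel₀ Real.pi_ne_zero
    _ ≤ _ := by gcongr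

/-- Radial Sobolev inequality in ℝ³: for `u` continuously differentiable with compact
support and radial, and `m > 0`,
`∫_{|x|>m} |u|⁴ dx ≤ m^{-2} (∫_{|x|>m} |∇u|² dx)^{1/2} (∫_{|x|>m} |u|² dx)^{3/2}`. -/
theorem stmt8 (u : EuclideanSpace ℝ (Fin 3) → ℂ) (hu : ContDiff ℝ 1 u)
    (hsupp : HasCompactSupport u)
    (hrad : ∀ x y : EuclideanSpace ℝ (Fin 3), ‖x‖ = ‖y‖ → u x = u y)
    (m : ℝ) (hm : 0 < m) :
    (∫ x in {x : EuclideanSpace ℝ (Fin 3) | m < ‖x‖}, ‖u x‖ ^ 4) ≤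
      1 / m ^ 2 *
        Real.sqrt (∫ x in {x : EuclideanSpace ℝ (Fin 3) | m < ‖x‖}, ‖fderiv ℝ u x‖ ^ 2) *
        (∫ x in {x : EuclideanSpace ℝ (Fin 3) | m < ‖x‖}, ‖u x‖ ^ 2) ^ ((3 : ℝ) / 2) := by
  set S := {x : EuclideanSpace ℝ (Fin 3) | m < ‖x‖}
  set A := ∫ x in S, ‖fderiv ℝ u x‖ ^ 2
  set B := ∫ x in S, ‖u x‖ ^ 2
  have hS : MeasurableSet S := measurableSet_lt measurable_const measurable_norm
  have hB : 0 ≤ B := setIntegral_nonneg hS fun _ _ => by positivity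
  have hbound : ∀ x ∈ S, ‖u x‖ ^ 2 ≤ 1 / m ^ 2 * √A * √B := fun x hx => by
    have hπ : (2 * Real.pi)⁻¹ ≤ 1 := inv_le_one_of_one_le₀ (by linarith [Real.pi_gt_three])
    have hmx : m ^ 2 ≤ ‖x‖ ^ 2 := pow_le_pow_left₀ hm.le (le_of_lt hx) 2
    rw [mul_assoc, one_div_mul_eq_div, le_div_iff₀ (by positivity)]
    calc ‖u x‖ ^ 2 * m ^ 2 ≤ ‖x‖ ^ 2 * ‖u x‖ ^ 2 := by rw [mul_comm]; gcongr
      _ ≤ (2 * Real.pi)⁻¹ * √A * √B :=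
          sq_norm_mul_norm_sq_le_of_radial hu hsupp hrad hm.le (le_of_lt hx)
      _ ≤ √A * √B := by
          rw [mul_assoc]; exact mul_le_of_le_one_left (by positivity) hπ
  calc ∫ x in S, ‖u x‖ ^ 4 ≤ 1 / m ^ 2 * √A * √B * B :=
        setIntegral_norm_pow_four_le hu.continuous hsupp hS hbound
    _ = 1 / m ^ 2 * √A * B ^ ((3 : ℝ) / 2) := by
        rw [show (3 : ℝ) / 2 = 1 + 1 / 2 by norm_num, Real.rpow_add' hB (by norm_num),
          Real.rpow_one, ← Real.sqrt_eq_rpow]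
        ring
end

section
/- Let u : ℝ → ℂ be continuously differentiable with compact support. Let m > 0 and let f : ℝ → ℝ be continuously differentiable, nondecreasing, with 0 ≤ f ≤ 1 and f(r) = 0 for all r ≤ m. Then for every λ > 0, ∫_m^∞ f(r) |u(r)|⁴ r² dr ≤ λ ∫_m^∞ f(r) |u'(r)|² r² dr + λ^{-1} m^{-4} (∫_m^∞ |u(r)|² r² dr)³. -/
/-!
Put `g = f |u|² r²`. Since `g` has compact support, `g r = -∫_r^∞ g'`, and in
`g' = f' |u|² r² + 2 f ⟪u, u'⟫ r² + 2 r f |u|²` the first and last terms are nonnegative for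
`r ≥ 0` (`f` is nondecreasing), so `g r ≤ S := 2 ∫_m^∞ f |u| |u'| r²` for `r > m`. Hence
`∫_m^∞ f |u|⁴ r² ≤ S ∫_m^∞ |u|² ≤ S m⁻² X` with `X = ∫_m^∞ |u|² r²`. Pointwise AM–GM gives
`S ≤ t ∫_m^∞ f |u'|² r² + t⁻¹ X` for every `t > 0` (using `f ≤ 1`), and `t = λ m² / X` yields
the claim.
-/

open MeasureTheory Set

theorem HasCompactSupport.integrable_of_eq_zero_of_deriv_eq_zero {E F : Type*}
    [NormedAddCommGroup E] [NormedSpace ℝ E] [NormedAddCommGroup F]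
    {u : ℝ → E} (hu : HasCompactSupport u) {w : ℝ → F} (hw : Continuous w)
    (h : ∀ x, u x = 0 → deriv u x = 0 → w x = 0) : Integrable w := by
  refine hw.integrable_of_hasCompactSupport (hu.mono' fun x hx => ?_)
  by_contra hxu
  exact hx (h x (image_eq_zero_of_notMem_tsupport hxu)
    (Function.notMem_support.mp fun hd => hxu (support_deriv_subset hd)))

theorem weight_mul_norm_sq_mul_sq_le_integral {E : Type*} [NormedAddCommGroup E]
    [InnerProductSpace ℝ E] {u : ℝ → E} (hu : ContDiff ℝ 1 u)
    (hsupp : HasCompactSupport u) {f : ℝ → ℝ} (hf : ContDiff ℝ 1 f) (hmono : Monotone f)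
    (hf0 : ∀ r, 0 ≤ f r) {r : ℝ} (hr : 0 ≤ r) :
    f r * ‖u r‖ ^ 2 * r ^ 2 ≤ 2 * ∫ s in Ioi r, f s * ‖u s‖ * ‖deriv u s‖ * s ^ 2 := by
  set g : ℝ → ℝ := fun r => f r * ‖u r‖ ^ 2 * r ^ 2
  have hg : ContDiff ℝ 1 g := (hf.mul (hu.norm_sq ℝ)).mul (contDiff_id.pow 2)
  have hg_supp : HasCompactSupport g := hsupp.mono fun x hx => by simp_all [g]
  have hg_deriv : ∀ s, deriv g s =
      (deriv f s * ‖u s‖ ^ 2 + f s * (2 * inner ℝ (u s) (deriv u s))) * s ^ 2 +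
        f s * ‖u s‖ ^ 2 * (2 * s) := by
    intro s
    have H := ((hf.differentiable one_ne_zero s).hasDerivAt.mul
      (hu.differentiable one_ne_zero s).hasDerivAt.norm_sq).mul (hasDerivAt_pow 2 s)
    exact (H.congr_deriv (by simp only [Pi.mul_apply]; ring)).deriv
  have hP : Integrable fun s => f s * ‖u s‖ * ‖deriv u s‖ * s ^ 2 :=
    hsupp.integrable_of_eq_zero_of_deriv_eq_zero
      (by have hu_cont := hu.continuous; have hu'_cont := hu.continuous_deriv le_rfl; fun_prop)
      fun x hx _ => by simp [hx]
  calc f r * ‖u r‖ ^ 2 * r ^ 2 = ∫ s in Ioi r, -deriv g s := by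
        rw [integral_neg, hg_supp.integral_Ioi_deriv_eq hg, neg_neg]
    _ ≤ ∫ s in Ioi r, 2 * (f s * ‖u s‖ * ‖deriv u s‖ * s ^ 2) := by
        have hg' : Integrable (deriv g) :=
          (hg.continuous_deriv le_rfl).integrable_of_hasCompactSupport hg_supp.deriv
        refine setIntegral_mono_on hg'.neg.integrableOn (hP.const_mul 2).integrableOn
          measurableSet_Ioi fun s hs => ?_
        have hs : 0 ≤ s := hr.trans (le_of_lt hs)
        have hinner := neg_le_of_abs_le (abs_real_inner_le_norm (u s) (deriv u s))
        have hdf : 0 ≤ deriv f s := hmono.deriv_nonneg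
        have hfs := hf0 s
        rw [hg_deriv]
        nlinarith [mul_nonneg (mul_nonneg hdf (sq_nonneg ‖u s‖)) (sq_nonneg s),
          mul_nonneg (mul_nonneg hfs (sq_nonneg ‖u s‖)) hs,
          mul_le_mul_of_nonneg_left hinner (mul_nonneg hfs (sq_nonneg s))]
    _ = _ := integral_const_mul 2 _

theorem setIntegral_weight_mul_norm_pow_four_mul_sq_le {E : Type*} [NormedAddCommGroup E]
    [InnerProductSpace ℝ E] {u : ℝ → E} (hu : ContDiff ℝ 1 u)
    (hsupp : HasCompactSupport u) {f : ℝ → ℝ} (hf : ContDiff ℝ 1 f) (hmono : Monotone f)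
    (hf0 : ∀ r, 0 ≤ f r) {m : ℝ} (hm : 0 ≤ m) :
    ∫ r in Ioi m, f r * ‖u r‖ ^ 4 * r ^ 2 ≤
      (2 * ∫ s in Ioi m, f s * ‖u s‖ * ‖deriv u s‖ * s ^ 2) * ∫ r in Ioi m, ‖u r‖ ^ 2 := by
  have hu_cont := hu.continuous
  have hu'_cont := hu.continuous_deriv le_rfl
  have hP0 : ∀ s, 0 ≤ f s * ‖u s‖ * ‖deriv u s‖ * s ^ 2 := fun s => by
    have := hf0 s
    positivity
  have hP : Integrable fun s => f s * ‖u s‖ * ‖deriv u s‖ * s ^ 2 :=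
    hsupp.integrable_of_eq_zero_of_deriv_eq_zero (by fun_prop) fun x hx _ => by simp [hx]
  have hN : Integrable fun r => ‖u r‖ ^ 2 :=
    hsupp.integrable_of_eq_zero_of_deriv_eq_zero (by fun_prop) fun x hx _ => by simp [hx]
  rw [← integral_const_mul]
  refine setIntegral_mono_of_nonneg (fun r _ => by have := hf0 r; positivity)
    (fun r hr => ?_) (hN.integrableOn.const_mul _)
  calc f r * ‖u r‖ ^ 4 * r ^ 2 = (f r * ‖u r‖ ^ 2 * r ^ 2) * ‖u r‖ ^ 2 := by ring
    _ ≤ (2 * ∫ s in Ioi m, f s * ‖u s‖ * ‖deriv u s‖ * s ^ 2) * ‖u r‖ ^ 2 := by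
      refine mul_le_mul_of_nonneg_right ?_ (sq_nonneg _)
      refine (weight_mul_norm_sq_mul_sq_le_integral hu hsupp hf hmono hf0
        (hm.trans (le_of_lt hr))).trans ?_
      exact mul_le_mul_of_nonneg_left (setIntegral_mono_set hP.integrableOn
        (.of_forall fun s => hP0 s) (Ioi_subset_Ioi (le_of_lt hr)).eventuallyLE) zero_le_two

theorem setIntegral_Ioi_le_inv_sq_mul_setIntegral_mul_sq {h : ℝ → ℝ} {m : ℝ} (hm : 0 < m)
    (h0 : ∀ r ∈ Ioi m, 0 ≤ h r) (hint : IntegrableOn (fun r => h r * r ^ 2) (Ioi m)) :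
    ∫ r in Ioi m, h r ≤ m⁻¹ ^ 2 * ∫ r in Ioi m, h r * r ^ 2 := by
  rw [← integral_const_mul]
  refine setIntegral_mono_of_nonneg h0 (fun r hr => ?_) (hint.const_mul _)
  have hmr : m ^ 2 ≤ r ^ 2 := pow_le_pow_left₀ hm.le (le_of_lt hr) 2
  rw [inv_pow, inv_mul_eq_div, le_div_iff₀ (by positivity)]
  exact mul_le_mul_of_nonneg_left hmr (h0 r hr)

theorem two_mul_setIntegral_le_mul_add_inv_mul {α : Type*} [MeasurableSpace α]
    {μ : Measure α} {s : Set α} {w x y ρ : α → ℝ} (hw0 : ∀ a, 0 ≤ w a) (hw1 : ∀ a, w a ≤ 1)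
    (hx : ∀ a, 0 ≤ x a) (hy : ∀ a, 0 ≤ y a) (hρ : ∀ a, 0 ≤ ρ a)
    (hwy : IntegrableOn (fun a => w a * y a ^ 2 * ρ a) s μ)
    (hx2 : IntegrableOn (fun a => x a ^ 2 * ρ a) s μ) {t : ℝ} (ht : 0 < t) :
    2 * ∫ a in s, w a * x a * y a * ρ a ∂μ ≤
      t * ∫ a in s, w a * y a ^ 2 * ρ a ∂μ + t⁻¹ * ∫ a in s, x a ^ 2 * ρ a ∂μ := by
  rw [← integral_const_mul, ← integral_const_mul, ← integral_const_mul,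
    ← integral_add (hwy.const_mul t) (hx2.const_mul t⁻¹)]
  refine setIntegral_mono_of_nonneg (fun a _ => ?_) (fun a _ => ?_)
    ((hwy.const_mul t).add (hx2.const_mul t⁻¹))
  · have := hw0 a; have := hx a; have := hy a; have := hρ a; positivity
  · have amgm : 2 * (x a * y a) ≤ t * y a ^ 2 + t⁻¹ * x a ^ 2 := by
      have := mul_inv_cancel₀ ht.ne'
      nlinarith [sq_nonneg (t * y a - x a), inv_pos.mpr ht]
    have hwx : w a * x a ^ 2 * ρ a ≤ x a ^ 2 * ρ a := by
      rw [mul_assoc]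
      exact mul_le_of_le_one_left (mul_nonneg (sq_nonneg _) (hρ a)) (hw1 a)
    nlinarith [mul_le_mul_of_nonneg_left amgm (mul_nonneg (hw0 a) (hρ a)),
      mul_le_mul_of_nonneg_left hwx (inv_pos.mpr ht).le]

theorem mul_le_of_forall_le_mul_add_inv_mul {S A X c lam : ℝ} (hA : 0 ≤ A) (hX : 0 ≤ X)
    (hc : 0 ≤ c) (hlam : 0 < lam) (h : ∀ t > 0, S ≤ t * A + t⁻¹ * X) :
    S * (c * X) ≤ lam * A + lam⁻¹ * c ^ 2 * X ^ 3 := by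
  rcases (mul_nonneg hc hX).eq_or_lt with hcX | hcX
  · rw [← hcX, mul_zero]
    positivity
  · calc S * (c * X) ≤ (lam / (c * X) * A + (lam / (c * X))⁻¹ * X) * (c * X) :=
          mul_le_mul_of_nonneg_right (h _ (by positivity)) hcX.le
      _ = lam * A + lam⁻¹ * c ^ 2 * X ^ 3 := by
          have hc0 : c ≠ 0 := left_ne_zero_of_mul hcX.ne'
          have hX0 : X ≠ 0 := right_ne_zero_of_mul hcX.ne'
          field_simp

theorem stmt9_general (u : ℝ → ℂ) (hu : ContDiff ℝ 1 u) (hsupp : HasCompactSupport u)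
    (m : ℝ) (hm : 0 < m) (f : ℝ → ℝ) (hf : ContDiff ℝ 1 f) (hmono : Monotone f)
    (hf0 : ∀ r, 0 ≤ f r) (hf1 : ∀ r, f r ≤ 1)
    (lam : ℝ) (hlam : 0 < lam) :
    (∫ r in Set.Ioi m, f r * ‖u r‖ ^ 4 * r ^ 2) ≤
      lam * (∫ r in Set.Ioi m, f r * ‖deriv u r‖ ^ 2 * r ^ 2) +
        lam⁻¹ * m⁻¹ ^ 4 * (∫ r in Set.Ioi m, ‖u r‖ ^ 2 * r ^ 2) ^ 3 := by
  have hu_cont := hu.continuous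
  have hu'_cont := hu.continuous_deriv le_rfl
  have hX : Integrable fun r => ‖u r‖ ^ 2 * r ^ 2 :=
    hsupp.integrable_of_eq_zero_of_deriv_eq_zero (by fun_prop) fun x hx _ => by simp [hx]
  have hA : Integrable fun r => f r * ‖deriv u r‖ ^ 2 * r ^ 2 :=
    hsupp.integrable_of_eq_zero_of_deriv_eq_zero (by fun_prop) fun x _ hx => by simp [hx]
  have hS : 0 ≤ 2 * ∫ s in Ioi m, f s * ‖u s‖ * ‖deriv u s‖ * s ^ 2 :=
    mul_nonneg zero_le_two (integral_nonneg fun s => by have := hf0 s; positivity)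
  calc ∫ r in Ioi m, f r * ‖u r‖ ^ 4 * r ^ 2
      ≤ (2 * ∫ s in Ioi m, f s * ‖u s‖ * ‖deriv u s‖ * s ^ 2) *
          (m⁻¹ ^ 2 * ∫ r in Ioi m, ‖u r‖ ^ 2 * r ^ 2) :=
        (setIntegral_weight_mul_norm_pow_four_mul_sq_le hu hsupp hf hmono hf0 hm.le).trans <|
          mul_le_mul_of_nonneg_left (setIntegral_Ioi_le_inv_sq_mul_setIntegral_mul_sq hm
            (fun r _ => by positivity) hX.integrableOn) hS
    _ ≤ _ := by
      rw [show m⁻¹ ^ 4 = (m⁻¹ ^ 2) ^ 2 by ring]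
      refine mul_le_of_forall_le_mul_add_inv_mul
        (integral_nonneg fun r => by have := hf0 r; positivity)
        (integral_nonneg fun r => by positivity) (by positivity) hlam fun t ht => ?_
      exact two_mul_setIntegral_le_mul_add_inv_mul hf0 hf1 (fun _ => norm_nonneg _)
        (fun _ => norm_nonneg _) (fun _ => sq_nonneg _) hA.integrableOn hX.integrableOn ht

/-- Weighted radial Sobolev bound used to absorb the `L⁴` error in the virial argument:
for `u : ℝ → ℂ` continuously differentiable with compact support, `m > 0`, `f` a `C¹`
nondecreasing weight with `0 ≤ f ≤ 1` vanishing on `(-∞, m]`, and any `λ > 0`,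
`∫_m^∞ f |u|⁴ r² dr ≤ λ ∫_m^∞ f |u'|² r² dr + λ⁻¹ m⁻⁴ (∫_m^∞ |u|² r² dr)³`. -/
theorem stmt9 (u : ℝ → ℂ) (hu : ContDiff ℝ 1 u) (hsupp : HasCompactSupport u)
    (m : ℝ) (hm : 0 < m) (f : ℝ → ℝ) (hf : ContDiff ℝ 1 f) (hmono : Monotone f)
    (hf0 : ∀ r, 0 ≤ f r) (hf1 : ∀ r, f r ≤ 1) (hfvanish : ∀ r ≤ m, f r = 0)
    (lam : ℝ) (hlam : 0 < lam) :
    (∫ r in Set.Ioi m, f r * ‖u r‖ ^ 4 * r ^ 2) ≤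
      lam * (∫ r in Set.Ioi m, f r * ‖deriv u r‖ ^ 2 * r ^ 2) +
        lam⁻¹ * m⁻¹ ^ 4 * (∫ r in Set.Ioi m, ‖u r‖ ^ 2 * r ^ 2) ^ 3 :=
  stmt9_general u hu hsupp m hm f hf hmono hf0 hf1 lam hlam
end

section
/- Let u : ℝ → ℂ be continuously differentiable with compact support, let m > 0, and set φ_m(r) := m r / (m + r) for r ≥ 0. Then ∫_0^∞ |u(r)|⁴ φ_m(r)² r dr ≤ 4√2 · (∫_0^∞ |u(r)|² r² dr) · (∫_0^∞ |u'(r)|² φ_m(r)² dr). -/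
open MeasureTheory Set Filter Topology
open scoped RealInnerProductSpace

/-!
Write `φ` for the weight and `I = ∫₀^∞ (r ‖u‖) (φ ‖u'‖) dr`. Integrating `(r φ ‖u‖²)'` over
`(r, ∞)`, where `(r φ)' ≥ 0`, gives the pointwise bound `r φ(r) ‖u(r)‖² ≤ 2 I`. Integrating
`(r² φ² ‖u‖⁴ / 2)'` over `(0, ∞)`, where the weight has derivative `r φ² + r² φ φ' ≥ r φ²`, gives
`∫ ‖u‖⁴ φ² r ≤ 2 ∫ (r φ ‖u‖²) (r ‖u‖) (φ ‖u'‖) ≤ 4 I²`, and Cauchy–Schwarz bounds `I²` by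
`(∫ ‖u‖² r²) (∫ ‖u'‖² φ²)`.
-/

lemma HasCompactSupport.eventuallyEq_zero_atTop {α F : Type*} [TopologicalSpace α] [T2Space α]
    [LinearOrder α] [NoMaxOrder α] [ClosedIciTopology α] [Zero F] {f : α → F}
    (hf : HasCompactSupport f) : f =ᶠ[atTop] 0 := by
  rw [hasCompactSupport_iff_eventuallyEq, coclosedCompact_eq_cocompact] at hf
  exact hf.filter_mono atTop_le_cocompact

lemma HasCompactSupport.integrableOn_Ioi_of_continuousOn {E F : Type*} [Zero E]
    [NormedAddCommGroup F] {u : ℝ → E} (hu : HasCompactSupport u) {g : ℝ → F} {a : ℝ}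
    (hg : ContinuousOn g (Ici a)) (hgu : ∀ s, u s = 0 → g s = 0) :
    IntegrableOn g (Ioi a) := by
  obtain ⟨R, hR⟩ := eventually_atTop.mp hu.eventuallyEq_zero_atTop
  have hIcc : IntegrableOn g (Icc a R) := (hg.mono Icc_subset_Ici_self).integrableOn_Icc
  have hIoi : IntegrableOn g (Ioi R) :=
    integrableOn_zero.congr_fun (fun x hx => (hgu x (hR x hx.le)).symm) measurableSet_Ioi
  refine (hIcc.union hIoi).mono_set fun x hx => ?_
  rcases le_or_gt x R with h | h
  · exact Or.inl ⟨le_of_lt hx, h⟩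
  · exact Or.inr h

lemma sq_integral_mul_le_integral_sq_mul_integral_sq {α : Type*} [MeasurableSpace α]
    {μ : Measure α} {f g : α → ℝ} (hf : Integrable (fun x => f x ^ 2) μ)
    (hg : Integrable (fun x => g x ^ 2) μ) (hfg : Integrable (fun x => f x * g x) μ) :
    (∫ x, f x * g x ∂μ) ^ 2 ≤ (∫ x, f x ^ 2 ∂μ) * ∫ x, g x ^ 2 ∂μ := by
  have hquad : ∀ t : ℝ, 0 ≤ (∫ x, g x ^ 2 ∂μ) * (t * t) + (-2 * ∫ x, f x * g x ∂μ) * t +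
      ∫ x, f x ^ 2 ∂μ := fun t => by
    have hexp : ∫ x, (f x - t * g x) ^ 2 ∂μ = (∫ x, g x ^ 2 ∂μ) * (t * t) +
        (-2 * ∫ x, f x * g x ∂μ) * t + ∫ x, f x ^ 2 ∂μ := by
      have hpt : (fun x => (f x - t * g x) ^ 2) =
          fun x => f x ^ 2 - (2 * t) * (f x * g x) + (t * t) * g x ^ 2 := by
        funext x; ring
      have h₁ : Integrable (fun x => f x ^ 2 - (2 * t) * (f x * g x)) μ :=
        hf.sub (hfg.const_mul _)
      rw [hpt, integral_add h₁ (hg.const_mul _), integral_sub hf (hfg.const_mul _),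
        integral_const_mul, integral_const_mul]
      ring
    exact hexp ▸ integral_nonneg fun x => sq_nonneg _
  have := discrim_le_zero hquad
  rw [discrim] at this
  nlinarith

lemma le_integral_Ioi_of_hasDerivAt_of_neg_le {F F' G : ℝ → ℝ} {a : ℝ}
    (hF : ∀ s ∈ Ici a, HasDerivAt F (F' s) s) (hF' : IntegrableOn F' (Ioi a))
    (hG : IntegrableOn G (Ioi a)) (hF0 : Tendsto F atTop (𝓝 0))
    (hle : ∀ s ∈ Ioi a, -F' s ≤ G s) :
    F a ≤ ∫ s in Ioi a, G s :=
  calc F a = ∫ s in Ioi a, -F' s := by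
        rw [integral_neg, integral_Ioi_of_hasDerivAt_of_tendsto' hF hF' hF0]; ring
    _ ≤ ∫ s in Ioi a, G s := setIntegral_mono_on hF'.neg hG measurableSet_Ioi hle

section
variable {E : Type*} [NormedAddCommGroup E] [InnerProductSpace ℝ E] {u : ℝ → E}

lemma hasDerivAt_norm_pow_two_mul_add_two {u' : E} {s : ℝ} (hu : HasDerivAt u u' s) (n : ℕ) :
    HasDerivAt (fun t => ‖u t‖ ^ (2 * n + 2))
      ((2 * n + 2) * ‖u s‖ ^ (2 * n) * ⟪u s, u'⟫) s := by
  have e : (fun t => ‖u t‖ ^ (2 * n + 2)) = (fun t => ‖u t‖ ^ 2) ^ (n + 1) := by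
    funext t
    simp only [Pi.pow_apply, ← pow_mul]
    ring_nf
  rw [e]
  refine (hu.norm_sq.pow (n + 1)).congr_deriv ?_
  rw [Nat.add_sub_cancel, ← pow_mul]
  push_cast
  ring

theorem weight_mul_norm_pow_add_integral_le (hu : ContDiff ℝ 1 u) (hsupp : HasCompactSupport u)
    {w w' : ℝ → ℝ} {a : ℝ} (hw : ∀ s ∈ Ici a, HasDerivAt w (w' s) s)
    (hw' : ContinuousOn w' (Ici a)) (hw0 : ∀ s ∈ Ioi a, 0 ≤ w s) (n : ℕ) :
    w a * ‖u a‖ ^ (2 * n + 2) + ∫ s in Ioi a, w' s * ‖u s‖ ^ (2 * n + 2) ≤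
      (2 * n + 2) * ∫ s in Ioi a, w s * ‖u s‖ ^ (2 * n + 1) * ‖deriv u s‖ := by
  have hu' : ∀ s, HasDerivAt u (deriv u s) s :=
    fun s => (hu.differentiable one_ne_zero s).hasDerivAt
  have huc := hu.continuous
  have hu'c := hu.continuous_deriv le_rfl
  have hwc : ContinuousOn w (Ici a) := fun s hs => (hw s hs).continuousAt.continuousWithinAt
  set F' : ℝ → ℝ := fun s => w' s * ‖u s‖ ^ (2 * n + 2) +
    w s * ((2 * n + 2) * ‖u s‖ ^ (2 * n) * ⟪u s, deriv u s⟫)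
  have hF : ∀ s ∈ Ici a, HasDerivAt (fun t => w t * ‖u t‖ ^ (2 * n + 2)) (F' s) s :=
    fun s hs => (hw s hs).mul (hasDerivAt_norm_pow_two_mul_add_two (hu' s) n)
  have hI₁ : IntegrableOn (fun s => w' s * ‖u s‖ ^ (2 * n + 2)) (Ioi a) :=
    hsupp.integrableOn_Ioi_of_continuousOn (by fun_prop) fun s hs => by simp [hs]
  have hI₂ : IntegrableOn (fun s => w s * ‖u s‖ ^ (2 * n + 1) * ‖deriv u s‖) (Ioi a) :=
    hsupp.integrableOn_Ioi_of_continuousOn (by fun_prop) fun s hs => by simp [hs]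
  have hI₃ : IntegrableOn F' (Ioi a) :=
    hsupp.integrableOn_Ioi_of_continuousOn (by fun_prop) fun s hs => by simp [F', hs]
  have hG : IntegrableOn (fun s => (2 * n + 2) * (w s * ‖u s‖ ^ (2 * n + 1) * ‖deriv u s‖) -
      w' s * ‖u s‖ ^ (2 * n + 2)) (Ioi a) := (hI₂.const_mul _).sub hI₁
  have hF0 : Tendsto (fun t => w t * ‖u t‖ ^ (2 * n + 2)) atTop (𝓝 0) :=
    tendsto_const_nhds.congr' <| by
      filter_upwards [hsupp.eventuallyEq_zero_atTop] with s hs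
      simp [hs]
  have hle : ∀ s ∈ Ioi a, -F' s ≤ (2 * n + 2) * (w s * ‖u s‖ ^ (2 * n + 1) * ‖deriv u s‖) -
      w' s * ‖u s‖ ^ (2 * n + 2) := fun s hs => by
    have hinner : -(‖u s‖ * ‖deriv u s‖) ≤ ⟪u s, deriv u s⟫ :=
      neg_le_of_abs_le (abs_real_inner_le_norm _ _)
    have hcoef : 0 ≤ w s * ((2 * n + 2) * ‖u s‖ ^ (2 * n)) := by
      have := hw0 s hs
      positivity
    have := mul_le_mul_of_nonneg_left hinner hcoef
    simp only [F', pow_succ]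
    linarith
  have key := le_integral_Ioi_of_hasDerivAt_of_neg_le hF hI₃ hG hF0 hle
  rw [integral_sub (hI₂.const_mul _) hI₁, integral_const_mul] at key
  linarith

variable {φ φ' : ℝ → ℝ}

theorem mul_weight_mul_norm_sq_le_two_mul_integral (hu : ContDiff ℝ 1 u)
    (hsupp : HasCompactSupport u) (hφ : ∀ s ∈ Ici 0, HasDerivAt φ (φ' s) s)
    (hφ' : ContinuousOn φ' (Ici 0)) (hφ0 : ∀ s ∈ Ioi 0, 0 ≤ φ s) (hφ'0 : ∀ s ∈ Ioi 0, 0 ≤ φ' s)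
    {r : ℝ} (hr : 0 ≤ r) :
    r * φ r * ‖u r‖ ^ 2 ≤ 2 * ∫ s in Ioi 0, s * ‖u s‖ * (φ s * ‖deriv u s‖) := by
  have hφc : ContinuousOn φ (Ici 0) := fun s hs => (hφ s hs).continuousAt.continuousWithinAt
  have huc := hu.continuous
  have hu'c := hu.continuous_deriv le_rfl
  have hw : ∀ s ∈ Ici r, HasDerivAt (fun t => t * φ t) (φ s + s * φ' s) s := fun s hs =>
    ((hasDerivAt_id' s).mul (hφ s (hr.trans hs))).congr_deriv (by ring)
  have hw' : ContinuousOn (fun s => φ s + s * φ' s) (Ici r) :=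
    (hφc.add (continuousOn_id.mul hφ')).mono (Ici_subset_Ici.mpr hr)
  have key := weight_mul_norm_pow_add_integral_le hu hsupp hw hw'
    (fun s hs => mul_nonneg (hr.trans hs.le) (hφ0 s (hr.trans_lt hs))) 0
  simp only [mul_zero, zero_add, pow_one, Nat.cast_zero] at key
  have hrest : 0 ≤ ∫ s in Ioi r, (φ s + s * φ' s) * ‖u s‖ ^ 2 :=
    setIntegral_nonneg measurableSet_Ioi fun s (hs : r < s) => by
      have hs0 : 0 < s := hr.trans_lt hs
      have := hφ0 s hs0
      have := hφ'0 s hs0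
      positivity
  have hcross : IntegrableOn (fun s => s * ‖u s‖ * (φ s * ‖deriv u s‖)) (Ioi 0) :=
    hsupp.integrableOn_Ioi_of_continuousOn (by fun_prop) fun s hs => by simp [hs]
  have hmono : ∫ s in Ioi r, s * φ s * ‖u s‖ * ‖deriv u s‖ ≤
      ∫ s in Ioi 0, s * ‖u s‖ * (φ s * ‖deriv u s‖) := by
    calc ∫ s in Ioi r, s * φ s * ‖u s‖ * ‖deriv u s‖
        = ∫ s in Ioi r, s * ‖u s‖ * (φ s * ‖deriv u s‖) := by congr 1; funext s; ring
      _ ≤ _ := setIntegral_mono_set hcross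
          ((ae_restrict_iff' measurableSet_Ioi).mpr (ae_of_all _ fun s (hs : 0 < s) => by
            have := hφ0 s hs; positivity))
          (Ioi_subset_Ioi hr).eventuallyLE
  linarith

theorem integral_norm_pow_four_mul_weight_sq_mul_le_four_mul_sq (hu : ContDiff ℝ 1 u)
    (hsupp : HasCompactSupport u) (hφ : ∀ s ∈ Ici 0, HasDerivAt φ (φ' s) s)
    (hφ' : ContinuousOn φ' (Ici 0)) (hφ0 : ∀ s ∈ Ioi 0, 0 ≤ φ s) (hφ'0 : ∀ s ∈ Ioi 0, 0 ≤ φ' s) :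
    ∫ r in Ioi 0, ‖u r‖ ^ 4 * φ r ^ 2 * r ≤
      4 * (∫ s in Ioi 0, s * ‖u s‖ * (φ s * ‖deriv u s‖)) ^ 2 := by
  set I := ∫ s in Ioi 0, s * ‖u s‖ * (φ s * ‖deriv u s‖)
  have hφc : ContinuousOn φ (Ici 0) := fun s hs => (hφ s hs).continuousAt.continuousWithinAt
  have huc := hu.continuous
  have hu'c := hu.continuous_deriv le_rfl
  have hw : ∀ s ∈ Ici (0 : ℝ), HasDerivAt (fun t => t ^ 2 * φ t ^ 2 / 2)
      (s * φ s ^ 2 + s ^ 2 * φ s * φ' s) s := fun s hs => by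
    refine (((hasDerivAt_pow 2 s).mul ((hφ s hs).pow 2)).div_const 2).congr_deriv ?_
    simp only [Nat.cast_ofNat, Nat.add_one_sub_one, pow_one, Pi.pow_apply]
    ring
  have key := weight_mul_norm_pow_add_integral_le hu hsupp hw (by fun_prop)
    (fun s _ => by positivity) 1
  norm_num at key
  have hLHS : IntegrableOn (fun r => ‖u r‖ ^ 4 * φ r ^ 2 * r) (Ioi 0) :=
    hsupp.integrableOn_Ioi_of_continuousOn (by fun_prop) fun s hs => by simp [hs]
  have hw'I : IntegrableOn (fun s => (s * φ s ^ 2 + s ^ 2 * φ s * φ' s) * ‖u s‖ ^ 4) (Ioi 0) :=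
    hsupp.integrableOn_Ioi_of_continuousOn (by fun_prop) fun s hs => by simp [hs]
  have hwI : IntegrableOn (fun s => s ^ 2 * φ s ^ 2 / 2 * ‖u s‖ ^ 3 * ‖deriv u s‖) (Ioi 0) :=
    hsupp.integrableOn_Ioi_of_continuousOn (by fun_prop) fun s hs => by simp [hs]
  have hcross : IntegrableOn (fun s => I * (s * ‖u s‖ * (φ s * ‖deriv u s‖))) (Ioi 0) :=
    hsupp.integrableOn_Ioi_of_continuousOn (by fun_prop) fun s hs => by simp [hs]
  calc ∫ r in Ioi 0, ‖u r‖ ^ 4 * φ r ^ 2 * r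
      ≤ ∫ s in Ioi 0, (s * φ s ^ 2 + s ^ 2 * φ s * φ' s) * ‖u s‖ ^ 4 :=
        setIntegral_mono_on hLHS hw'I measurableSet_Ioi fun s (hs : 0 < s) => by
          have := hφ0 s hs
          have := hφ'0 s hs
          nlinarith [show 0 ≤ s ^ 2 * φ s * φ' s * ‖u s‖ ^ 4 by positivity]
    _ ≤ 4 * ∫ s in Ioi 0, s ^ 2 * φ s ^ 2 / 2 * ‖u s‖ ^ 3 * ‖deriv u s‖ := key
    _ ≤ 4 * ∫ s in Ioi 0, I * (s * ‖u s‖ * (φ s * ‖deriv u s‖)) := by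
        refine mul_le_mul_of_nonneg_left ?_ (by norm_num)
        refine setIntegral_mono_on hwI hcross measurableSet_Ioi fun s (hs : 0 < s) => ?_
        have hpt := mul_weight_mul_norm_sq_le_two_mul_integral hu hsupp hφ hφ' hφ0 hφ'0 hs.le
        have := hφ0 s hs
        calc s ^ 2 * φ s ^ 2 / 2 * ‖u s‖ ^ 3 * ‖deriv u s‖
            = s * φ s * ‖u s‖ ^ 2 / 2 * (s * ‖u s‖ * (φ s * ‖deriv u s‖)) := by ring
          _ ≤ I * (s * ‖u s‖ * (φ s * ‖deriv u s‖)) := by gcongr; linarith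
    _ = 4 * I ^ 2 := by rw [integral_const_mul]; ring

theorem integral_norm_pow_four_mul_weight_sq_mul_le (hu : ContDiff ℝ 1 u)
    (hsupp : HasCompactSupport u) (hφ : ∀ s ∈ Ici 0, HasDerivAt φ (φ' s) s)
    (hφ' : ContinuousOn φ' (Ici 0)) (hφ0 : ∀ s ∈ Ioi 0, 0 ≤ φ s) (hφ'0 : ∀ s ∈ Ioi 0, 0 ≤ φ' s) :
    ∫ r in Ioi 0, ‖u r‖ ^ 4 * φ r ^ 2 * r ≤
      4 * (∫ r in Ioi 0, ‖u r‖ ^ 2 * r ^ 2) * ∫ r in Ioi 0, ‖deriv u r‖ ^ 2 * φ r ^ 2 := by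
  have hφc : ContinuousOn φ (Ici 0) := fun s hs => (hφ s hs).continuousAt.continuousWithinAt
  have huc := hu.continuous
  have hu'c := hu.continuous_deriv le_rfl
  have hcs := sq_integral_mul_le_integral_sq_mul_integral_sq
    (f := fun s => s * ‖u s‖) (g := fun s => φ s * ‖deriv u s‖) (μ := volume.restrict (Ioi 0))
    (hsupp.integrableOn_Ioi_of_continuousOn (by fun_prop) fun s hs => by simp [hs])
    (hsupp.deriv.integrableOn_Ioi_of_continuousOn (by fun_prop) fun s hs => by simp [hs])
    (hsupp.integrableOn_Ioi_of_continuousOn (by fun_prop) fun s hs => by simp [hs])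
  have hP : ∫ s in Ioi 0, (s * ‖u s‖) ^ 2 = ∫ r in Ioi 0, ‖u r‖ ^ 2 * r ^ 2 := by
    congr 1; funext s; ring
  have hQ : ∫ s in Ioi 0, (φ s * ‖deriv u s‖) ^ 2 = ∫ r in Ioi 0, ‖deriv u r‖ ^ 2 * φ r ^ 2 := by
    congr 1; funext s; ring
  rw [hP, hQ] at hcs
  calc ∫ r in Ioi 0, ‖u r‖ ^ 4 * φ r ^ 2 * r
      ≤ 4 * (∫ s in Ioi 0, s * ‖u s‖ * (φ s * ‖deriv u s‖)) ^ 2 :=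
        integral_norm_pow_four_mul_weight_sq_mul_le_four_mul_sq hu hsupp hφ hφ' hφ0 hφ'0
    _ ≤ 4 * ((∫ r in Ioi 0, ‖u r‖ ^ 2 * r ^ 2) * ∫ r in Ioi 0, ‖deriv u r‖ ^ 2 * φ r ^ 2) := by
        gcongr
    _ = _ := by ring

end

lemma hasDerivAt_mul_div_add {m s : ℝ} (hs : m + s ≠ 0) :
    HasDerivAt (fun t => m * t / (m + t)) (m ^ 2 / (m + s) ^ 2) s := by
  refine (((hasDerivAt_id' s).const_mul m).div ((hasDerivAt_id' s).const_add m) hs).congr_deriv ?_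
  field_simp
  ring

/-- Weighted radial Sobolev bound with the saturated virial weight `φ_m(r) = m r/(m+r)`:
for `u : ℝ → ℂ` continuously differentiable with compact support and `m > 0`,
`∫_0^∞ |u|⁴ φ_m² r dr ≤ 4√2 (∫_0^∞ |u|² r² dr)(∫_0^∞ |u'|² φ_m² dr)`. -/
theorem stmt10 (u : ℝ → ℂ) (hu : ContDiff ℝ 1 u) (hsupp : HasCompactSupport u)
    (m : ℝ) (hm : 0 < m) :
    (∫ r in Set.Ioi (0 : ℝ), ‖u r‖ ^ 4 * (m * r / (m + r)) ^ 2 * r) ≤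
      4 * Real.sqrt 2 * (∫ r in Set.Ioi (0 : ℝ), ‖u r‖ ^ 2 * r ^ 2) *
        (∫ r in Set.Ioi (0 : ℝ), ‖deriv u r‖ ^ 2 * (m * r / (m + r)) ^ 2) := by
  have hP : 0 ≤ ∫ r in Ioi (0 : ℝ), ‖u r‖ ^ 2 * r ^ 2 := integral_nonneg fun r => by positivity
  have hQ : 0 ≤ ∫ r in Ioi (0 : ℝ), ‖deriv u r‖ ^ 2 * (m * r / (m + r)) ^ 2 :=
    integral_nonneg fun r => by positivity
  calc (∫ r in Ioi (0 : ℝ), ‖u r‖ ^ 4 * (m * r / (m + r)) ^ 2 * r)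
      ≤ 4 * (∫ r in Ioi (0 : ℝ), ‖u r‖ ^ 2 * r ^ 2) *
          ∫ r in Ioi (0 : ℝ), ‖deriv u r‖ ^ 2 * (m * r / (m + r)) ^ 2 :=
        integral_norm_pow_four_mul_weight_sq_mul_le hu hsupp
          (fun s (hs : 0 ≤ s) => hasDerivAt_mul_div_add (by positivity))
          (ContinuousOn.div continuousOn_const (by fun_prop) fun s (hs : 0 ≤ s) => by positivity)
          (fun s (hs : 0 < s) => by positivity) (fun s _ => by positivity)
    _ ≤ 4 * Real.sqrt 2 * (∫ r in Ioi (0 : ℝ), ‖u r‖ ^ 2 * r ^ 2) *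
          ∫ r in Ioi (0 : ℝ), ‖deriv u r‖ ^ 2 * (m * r / (m + r)) ^ 2 := by
        gcongr
        exact le_mul_of_one_le_right (by norm_num) (Real.one_le_sqrt.mpr (by norm_num))
end

section
/- Let m* := inf{ G(u) : u smooth with compact support on ℝ³, u ≠ 0, K(u) ≤ 0 }. For every δ > 0 there exist constants κ₂ > 0 and κ₀ > 0 such that every smooth compactly supported radial function u : ℝ³ → ℂ with I(u) < m* − δ satisfies K(u) ≥ min(κ₂, κ₀ ∫_{ℝ³}|∇u|² dx). -/
open MeasureTheory

noncomputable section

/-- Virial functional `K(u) = ∫|∇u|² − (3/4)∫|u|⁴`. -/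
def Kfun (u : EuclideanSpace ℝ (Fin 3) → ℂ) : ℝ :=
  (∫ x, ‖fderiv ℝ u x‖ ^ 2) - (3 / 4) * (∫ x, ‖u x‖ ^ 4)

/-- `G(u) = J(u) − K(u)/3 = (1/6)∫|∇u|² + (1/2)∫|u|²`. -/
def Gfun (u : EuclideanSpace ℝ (Fin 3) → ℂ) : ℝ :=
  (1 / 6) * (∫ x, ‖fderiv ℝ u x‖ ^ 2) + (1 / 2) * (∫ x, ‖u x‖ ^ 2)

/-- `I(u) = J(u) − K(u)/2 = (1/2)∫|u|² + (1/8)∫|u|⁴`. -/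
def Ifun (u : EuclideanSpace ℝ (Fin 3) → ℂ) : ℝ :=
  (1 / 2) * (∫ x, ‖u x‖ ^ 2) + (1 / 8) * (∫ x, ‖u x‖ ^ 4)

/-- The variational threshold `m* = inf{G(u) : u ≠ 0, K(u) ≤ 0}` (which equals the
ground state action `J(Q)`). -/
def mstar : ℝ :=
  sInf {c : ℝ | ∃ u : EuclideanSpace ℝ (Fin 3) → ℂ,
    ContDiff ℝ (⊤ : ℕ∞) u ∧ HasCompactSupport u ∧ u ≠ 0 ∧ Kfun u ≤ 0 ∧ c = Gfun u}

lemma Gfun_nonneg (u : EuclideanSpace ℝ (Fin 3) → ℂ) : 0 ≤ Gfun u := by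
  have h1 : 0 ≤ ∫ x, ‖fderiv ℝ u x‖ ^ 2 := integral_nonneg fun x => by positivity
  have h2 : 0 ≤ ∫ x, ‖u x‖ ^ 2 := integral_nonneg fun x => by positivity
  unfold Gfun; linarith

lemma mstar_bddBelow : BddBelow {c : ℝ | ∃ u : EuclideanSpace ℝ (Fin 3) → ℂ,
    ContDiff ℝ (⊤ : ℕ∞) u ∧ HasCompactSupport u ∧ u ≠ 0 ∧ Kfun u ≤ 0 ∧ c = Gfun u} := by
  refine ⟨0, fun c hc => ?_⟩
  obtain ⟨u, -, -, -, -, rfl⟩ := hc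
  exact Gfun_nonneg u

lemma mstar_nonneg : 0 ≤ mstar :=
  Real.sInf_nonneg fun c hc => by obtain ⟨u, -, -, -, -, rfl⟩ := hc; exact Gfun_nonneg u

lemma mstar_le {u : EuclideanSpace ℝ (Fin 3) → ℂ} (h1 : ContDiff ℝ (⊤ : ℕ∞) u)
    (h2 : HasCompactSupport u) (h3 : u ≠ 0) (h4 : Kfun u ≤ 0) : mstar ≤ Gfun u :=
  csInf_le mstar_bddBelow ⟨u, h1, h2, h3, h4, rfl⟩

/-- Variational lower bound on `K` below the threshold (Lemma 4.3 (II) of the paper):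
for any `δ > 0` there are `κ₂, κ₀ > 0` such that every smooth compactly supported radial
`u` with `I(u) < m* − δ` satisfies `K(u) ≥ min(κ₂, κ₀ ∫|∇u|²)`. -/
theorem stmt13 (δ : ℝ) (hδ : 0 < δ) :
    ∃ κ₂ : ℝ, 0 < κ₂ ∧ ∃ κ₀ : ℝ, 0 < κ₀ ∧
      ∀ u : EuclideanSpace ℝ (Fin 3) → ℂ,
        ContDiff ℝ (⊤ : ℕ∞) u → HasCompactSupport u →
        (∀ x y : EuclideanSpace ℝ (Fin 3), ‖x‖ = ‖y‖ → u x = u y) →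
        Ifun u < mstar - δ →
        min κ₂ (κ₀ * ∫ x, ‖fderiv ℝ u x‖ ^ 2) ≤ Kfun u := by
  have hms0 : 0 ≤ mstar := mstar_nonneg
  have hden : 0 < 2 * (mstar + δ) := by linarith
  set κ₀ : ℝ := min (1 / 2) (δ / (2 * (mstar + δ))) with hκ₀def
  have hκ₀pos : 0 < κ₀ := lt_min (by norm_num) (div_pos hδ hden)
  have hκ₀half : κ₀ ≤ 1 / 2 := min_le_left _ _
  have hκ₀δ : κ₀ ≤ δ / (2 * (mstar + δ)) := min_le_right _ _
  clear_value κ₀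
  clear hκ₀def
  refine ⟨3 * δ, by linarith, κ₀, hκ₀pos, ?_⟩
  intro u hu hcs hrad hI
  have hdu : Differentiable ℝ u := hu.differentiable (by simp)
  set T : ℝ := ∫ x, ‖fderiv ℝ u x‖ ^ 2 with hTdef
  set M : ℝ := ∫ x, ‖u x‖ ^ 2 with hMdef
  set P : ℝ := ∫ x, ‖u x‖ ^ 4 with hPdef
  have hT0 : 0 ≤ T := integral_nonneg fun x => by positivity
  have hM0 : 0 ≤ M := integral_nonneg fun x => by positivity
  have hP0 : 0 ≤ P := integral_nonneg fun x => by positivity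
  have hIu : Ifun u = 1 / 2 * M + 1 / 8 * P := rfl
  have hKu : Kfun u = T - 3 / 4 * P := rfl
  have hGu : Gfun u = 1 / 6 * T + 1 / 2 * M := rfl
  rw [hIu] at hI
  rw [hKu]
  have hmsδ : δ < mstar := by linarith
  rcases le_or_gt (Kfun u) 0 with hK | hK
  · -- K(u) ≤ 0 : impossible unless u = 0
    rcases eq_or_ne u 0 with rfl | hne
    · have hT' : T = 0 := by
        have : ∀ x : EuclideanSpace ℝ (Fin 3),
            ‖fderiv ℝ (0 : EuclideanSpace ℝ (Fin 3) → ℂ) x‖ ^ 2 = 0 := by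
          intro x
          have h0 : fderiv ℝ (0 : EuclideanSpace ℝ (Fin 3) → ℂ) x = 0 :=
            fderiv_const_apply 0
          rw [h0]; simp
        simp only [hTdef]
        rw [integral_congr_ae (Filter.Eventually.of_forall this)]
        simp
      have hP' : P = 0 := by
        simp only [hPdef]
        simp
      rw [hP', hT']
      have : min (3 * δ) (κ₀ * 0) ≤ 0 := by
        rw [mul_zero]
        exact min_le_right _ _
      linarith
    · exfalso
      have h1 : mstar ≤ Gfun u := mstar_le hu hcs hne hK
      rw [hGu] at h1
      rw [hKu] at hK
      linarith
  · -- K(u) > 0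
    by_contra hcon
    push_neg at hcon
    rw [lt_min_iff] at hcon
    obtain ⟨h1, h2⟩ := hcon
    rw [hKu] at hK
    rcases le_or_gt P 0 with hPle | hPpos
    · -- P = 0, so K = T and κ₀ T ≤ T/2 < T
      have hPz : P = 0 := le_antisymm hPle hP0
      rw [hPz] at h2 hK
      nlinarith [mul_le_mul_of_nonneg_right hκ₀half hT0]
    · -- main case: rescale
      have hTpos : 0 < T := by linarith
      set s : ℝ := 4 * T / (3 * P) with hsdef
      have hspos : 0 < s := by positivity
      set c : ℝ := Real.sqrt s with hcdef
      have hcpos : 0 < c := Real.sqrt_pos.mpr hspos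
      have hc2 : c ^ 2 = s := Real.sq_sqrt hspos.le
      set v : EuclideanSpace ℝ (Fin 3) → ℂ := fun x => c • u x with hvdef
      have hv : ContDiff ℝ (⊤ : ℕ∞) v := hu.const_smul c
      have hvcs : HasCompactSupport v := hcs.smul_left (f := fun _ => c)
      have hne : u ≠ 0 := by
        intro h
        rw [hPdef, h] at hPpos
        simp at hPpos
      have hvne : v ≠ 0 := by
        intro h
        apply hne
        funext x
        have := congrFun h x
        simp only [hvdef, Pi.zero_apply] at this
        exact (smul_eq_zero.mp this).resolve_left (by exact_mod_cast hcpos.ne')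
      have hDT : (∫ x, ‖fderiv ℝ v x‖ ^ 2) = c ^ 2 * T := by
        have hpt : ∀ x, ‖fderiv ℝ v x‖ ^ 2 = c ^ 2 * ‖fderiv ℝ u x‖ ^ 2 := by
          intro x
          rw [hvdef]
          rw [fderiv_fun_const_smul (hdu x) c]
          rw [norm_smul c (fderiv ℝ u x), Real.norm_eq_abs, abs_of_pos hcpos, mul_pow]
        rw [integral_congr_ae (Filter.Eventually.of_forall hpt), integral_const_mul]
      have hDM : (∫ x, ‖v x‖ ^ 2) = c ^ 2 * M := by
        have hpt : ∀ x, ‖v x‖ ^ 2 = c ^ 2 * ‖u x‖ ^ 2 := by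
          intro x
          simp only [hvdef]
          rw [norm_smul c (u x), Real.norm_eq_abs, abs_of_pos hcpos, mul_pow]
        rw [integral_congr_ae (Filter.Eventually.of_forall hpt), integral_const_mul]
      have hDP : (∫ x, ‖v x‖ ^ 4) = c ^ 4 * P := by
        have hpt : ∀ x, ‖v x‖ ^ 4 = c ^ 4 * ‖u x‖ ^ 4 := by
          intro x
          simp only [hvdef]
          rw [norm_smul c (u x), Real.norm_eq_abs, abs_of_pos hcpos, mul_pow]
        rw [integral_congr_ae (Filter.Eventually.of_forall hpt), integral_const_mul]
      have hsP : s * (3 * P) = 4 * T := by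
        rw [hsdef]
        field_simp
      have hKv : Kfun v ≤ 0 := by
        have hc4 : c ^ 4 = s ^ 2 := by
          rw [show (4 : ℕ) = 2 * 2 from rfl, pow_mul, hc2]
        have hz : Kfun v = 0 := by
          unfold Kfun
          rw [hDT, hDP, hc2, hc4]
          linear_combination (-s / 4) * hsP
        exact hz.le
      have hmv : mstar ≤ Gfun v := mstar_le hv hvcs hvne hKv
      have hGv : Gfun v = c ^ 2 * (1 / 6 * T + 1 / 2 * M) := by
        unfold Gfun
        rw [hDT, hDM]; ring
      rw [hGv, hc2] at hmv
      -- mstar ≤ s * (T/6 + M/2),  s * 3P = 4T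
      have key : mstar * (3 * P) ≤ 4 * T * (1 / 6 * T + 1 / 2 * M) := by
        have h3P : (0:ℝ) < 3 * P := by linarith
        calc mstar * (3 * P) ≤ (s * (1 / 6 * T + 1 / 2 * M)) * (3 * P) :=
              mul_le_mul_of_nonneg_right hmv h3P.le
          _ = (s * (3 * P)) * (1 / 6 * T + 1 / 2 * M) := by ring
          _ = 4 * T * (1 / 6 * T + 1 / 2 * M) := by rw [hsP]
      -- from h2 : T - 3/4 P < κ₀ T, get (1-κ₀) T < 3/4 P
      -- then (1-κ₀) * 4T*G < 3P*G ≤ ... combine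
      clear hu hcs hrad hdu hv hvcs hvne hDT hDM hDP hKv hGv hIu hKu hGu hne
      clear hmv
      clear_value v
      clear hvdef v
      clear_value c
      clear hcdef hc2 hcpos c
      clear_value s
      clear hsdef hspos hsP s
      clear_value T M P
      clear hTdef hMdef hPdef
      have hG0 : 0 < 1 / 6 * T + 1 / 2 * M := by linarith
      have hκ₀1 : (1 : ℝ) - κ₀ ≥ 1 / 2 := by linarith
      have h4T : (1 - κ₀) * (4 * T) < 3 * P := by linarith [h2]
      have step : (1 - κ₀) * mstar * (3 * P) < 3 * P * (1 / 6 * T + 1 / 2 * M) := by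
        have hA := mul_le_mul_of_nonneg_left key (by linarith : (0:ℝ) ≤ 1 - κ₀)
        have hB := mul_lt_mul_of_pos_right h4T hG0
        nlinarith [hA, hB]
      have h3P : (0:ℝ) < 3 * P := by linarith
      have step2 : (1 - κ₀) * mstar < 1 / 6 * T + 1 / 2 * M := by
        refine lt_of_mul_lt_mul_right ?_ h3P.le
        calc (1 - κ₀) * mstar * (3 * P) < 3 * P * (1 / 6 * T + 1 / 2 * M) := step
          _ = (1 / 6 * T + 1 / 2 * M) * (3 * P) := by ring
      -- G = I + K/6
      have step3 : (1 - κ₀) * mstar < (mstar - δ) + (3 * δ) / 6 := by linarith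
      -- so κ₀ * mstar > δ/2, but κ₀ * mstar ≤ δ * mstar / (2(mstar+δ)) < δ/2
      have hbound : κ₀ * mstar ≤ δ * mstar / (2 * (mstar + δ)) := by
        apply mul_le_mul_of_nonneg_right hκ₀δ hms0 |>.trans_eq
        ring
      have hlt : δ * mstar / (2 * (mstar + δ)) < δ / 2 := by
        rw [div_lt_div_iff₀ hden (by norm_num)]
        linarith [mul_pos hδ hδ]
      linarith

end
end
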